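/- arXiv:2204.08929 — 5 statements merged into one kernel-verified Lean document; each statement's English description precedes it below -/
import Mathlib

section
/- There exist constants c, C > 0 depending only on p (and the dimensions n, N) such that for every κ ≥ 0 and all matrices ξ₁, ξ₂ ∈ ℝ^{n×N} one has c·|V(ξ₁) − V(ξ₂)|² ≤ (S(ξ₁) − S(ξ₂)) : (ξ₁ − ξ₂) ≤ C·|V(ξ₁) − V(ξ₂)|². -/
open scoped RealInnerProductSpace

/-- The nonlinear operator `S(ξ) = (κ + |ξ|)^(p-2) ξ` on `n × N` real matrices,
equipped with the Frobenius (Euclidean) norm; for `κ = 0` and `ξ = 0` the value is `0`. -/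
noncomputable def Sop (n N : ℕ) (p κ : ℝ) (ξ : EuclideanSpace ℝ (Fin n × Fin N)) :
    EuclideanSpace ℝ (Fin n × Fin N) :=
  ((κ + ‖ξ‖) ^ (p - 2)) • ξ

/-- The nonlinear operator `V(ξ) = (κ + |ξ|)^((p-2)/2) ξ`. -/
noncomputable def Vop (n N : ℕ) (p κ : ℝ) (ξ : EuclideanSpace ℝ (Fin n × Fin N)) :
    EuclideanSpace ℝ (Fin n × Fin N) :=
  ((κ + ‖ξ‖) ^ ((p - 2) / 2)) • ξ

/-!
Both sides, expanded in the inner product space, are affine functions of `t = ⟪ξ₁, ξ₂⟫` with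
coefficients depending only on `a = ‖ξ₁‖` and `b = ‖ξ₂‖`. By Cauchy–Schwarz `|t| ≤ a b`, so it is
enough to compare them at the endpoints `t = ± a b`, which are the one-dimensional cases.
For `t = a b` and `b ≤ a`, both `(κ + a)^α a - (κ + b)^α b` (with `α = p - 2` and `α = (p - 2)/2`)
are comparable to `(κ + a)^α (a - b)`: the defect `((κ + a)^α - (κ + b)^α) b` is controlled by the
tangent-line (Bernoulli) inequality for `τ ↦ τ^(α + 1)`. For `t = -a b` the lower bound is AM–GM
and the upper bound is the monotonicity of `τ ↦ (κ + τ)^(p - 2) τ`.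
-/

namespace VCoercivity

lemma rpow_tangent_le_rpow {q u v : ℝ} (hq : 1 ≤ q) (hu : 0 < u) (hv : 0 ≤ v) :
    u ^ q + q * u ^ (q - 1) * (v - u) ≤ v ^ q := by
  have h := mul_le_mul_of_nonneg_left
    (one_add_mul_self_le_rpow_one_add (by linarith [div_nonneg hv hu.le] : -1 ≤ v / u - 1) hq)
    (Real.rpow_nonneg hu.le q)
  rw [add_sub_cancel, ← Real.mul_rpow hu.le (div_nonneg hv hu.le), mul_div_cancel₀ _ hu.ne'] at h
  calc u ^ q + q * u ^ (q - 1) * (v - u) = u ^ q * (1 + q * (v / u - 1)) := by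
        rw [Real.rpow_sub_one hu.ne']; field_simp
    _ ≤ v ^ q := h

lemma rpow_le_rpow_tangent {q u v : ℝ} (hq₀ : 0 ≤ q) (hq : q ≤ 1) (hu : 0 < u) (hv : 0 ≤ v) :
    v ^ q ≤ u ^ q + q * u ^ (q - 1) * (v - u) := by
  have h := mul_le_mul_of_nonneg_left
    (rpow_one_add_le_one_add_mul_self (by linarith [div_nonneg hv hu.le] : -1 ≤ v / u - 1) hq₀ hq)
    (Real.rpow_nonneg hu.le q)
  rw [add_sub_cancel, ← Real.mul_rpow hu.le (div_nonneg hv hu.le), mul_div_cancel₀ _ hu.ne'] at h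
  calc v ^ q ≤ u ^ q * (1 + q * (v / u - 1)) := h
    _ = u ^ q + q * u ^ (q - 1) * (v - u) := by
        rw [Real.rpow_sub_one hu.ne']; field_simp

lemma rpow_sub_rpow_mul_le {α u v : ℝ} (hα : 0 ≤ α) (hv : 0 ≤ v) (hvu : v ≤ u) :
    (u ^ α - v ^ α) * v ≤ α * (u ^ α * (u - v)) := by
  obtain rfl | hu := (hv.trans hvu).eq_or_lt
  · obtain rfl : v = 0 := le_antisymm hvu hv
    simp
  have h := rpow_tangent_le_rpow (q := α + 1) (by linarith) hu hv
  rw [add_sub_cancel_right, Real.rpow_add_one hu.ne', Real.rpow_add_one' hv (by linarith)] at h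
  linear_combination h

lemma mul_le_rpow_sub_rpow_mul {α u v : ℝ} (hα₁ : -1 < α) (hα : α ≤ 0) (hv : 0 ≤ v)
    (hvu : v ≤ u) : α * (u ^ α * (u - v)) ≤ (u ^ α - v ^ α) * v := by
  obtain rfl | hu := (hv.trans hvu).eq_or_lt
  · obtain rfl : v = 0 := le_antisymm hvu hv
    simp
  have h := rpow_le_rpow_tangent (q := α + 1) (by linarith) (by linarith) hu hv
  rw [add_sub_cancel_right, Real.rpow_add_one hu.ne', Real.rpow_add_one' hv (by linarith)] at h
  linear_combination h

def IsComparable (c C P Q : ℝ) : Prop := c * Q ≤ P ∧ P ≤ C * Q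

namespace IsComparable

variable {c C c' C' P Q W : ℝ}

lemma mono (h : IsComparable c C P Q) (hc : c' ≤ c) (hC : C ≤ C') (hQ : 0 ≤ Q) :
    IsComparable c' C' P Q :=
  ⟨(mul_le_mul_of_nonneg_right hc hQ).trans h.1, h.2.trans (mul_le_mul_of_nonneg_right hC hQ)⟩

lemma mul_right (h : IsComparable c C P Q) {d : ℝ} (hd : 0 ≤ d) :
    IsComparable c C (P * d) (Q * d) :=
  ⟨by linear_combination mul_le_mul_of_nonneg_right h.1 hd,
    by linear_combination mul_le_mul_of_nonneg_right h.2 hd⟩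

lemma sq (h : IsComparable c C P Q) (hc : 0 ≤ c) (hQ : 0 ≤ Q) :
    IsComparable (c ^ 2) (C ^ 2) (P ^ 2) (Q ^ 2) := by
  have hcQ : 0 ≤ c * Q := mul_nonneg hc hQ
  constructor
  · simpa only [mul_pow] using pow_le_pow_left₀ hcQ h.1 2
  · simpa only [mul_pow] using pow_le_pow_left₀ (hcQ.trans h.1) h.2 2

lemma of_common (hP : IsComparable c C P W) (hQ : IsComparable c' C' Q W) (hc : 0 ≤ c)
    (hC : 0 ≤ C) (hc' : 0 < c') (hC' : 0 < C') : IsComparable (c / C') (C / c') P Q := by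
  constructor
  · calc c / C' * Q ≤ c / C' * (C' * W) := by gcongr; exact hQ.2
      _ = c * W := by field_simp
      _ ≤ P := hP.1
  · calc P ≤ C * W := hP.2
      _ = C / c' * (c' * W) := by field_simp
      _ ≤ C / c' * Q := by gcongr; exact hQ.1

lemma of_abs_le {P₀ P₁ Q₀ Q₁ m t : ℝ}
    (hm : IsComparable c C (P₀ + P₁ * m) (Q₀ + Q₁ * m))
    (hm' : IsComparable c C (P₀ + P₁ * -m) (Q₀ + Q₁ * -m)) (ht : |t| ≤ m) :
    IsComparable c C (P₀ + P₁ * t) (Q₀ + Q₁ * t) := by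
  obtain ⟨h₁, h₂⟩ := abs_le.mp ht
  constructor
  · rcases le_total 0 (P₁ - c * Q₁) with h | h <;> nlinarith [hm.1, hm'.1]
  · rcases le_total 0 (C * Q₁ - P₁) with h | h <;> nlinarith [hm.2, hm'.2]

end IsComparable

lemma rpow_mul_sub_rpow_mul_comparable {α κ b x : ℝ} (hα : -1 < α) (hκ : 0 ≤ κ) (hb : 0 ≤ b)
    (hbx : b ≤ x) :
    IsComparable (min 1 (α + 1)) (max 1 (α + 1))
      ((κ + x) ^ α * x - (κ + b) ^ α * b) ((κ + x) ^ α * (x - b)) := by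
  have hv : 0 ≤ κ + b := by linarith
  have hvu : κ + b ≤ κ + x := by linarith
  have hM : 0 ≤ (κ + x) ^ α * (x - b) := mul_nonneg (Real.rpow_nonneg (by linarith) _) (by linarith)
  have hsplit : (κ + x) ^ α * x - (κ + b) ^ α * b
      = (κ + x) ^ α * (x - b) + ((κ + x) ^ α - (κ + b) ^ α) * b := by ring
  have hdiff : (κ + x) - (κ + b) = x - b := by ring
  rcases le_total 0 α with hα0 | hα0
  · have hfac : 0 ≤ (κ + x) ^ α - (κ + b) ^ α := sub_nonneg.2 (Real.rpow_le_rpow hv hvu hα0)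
    have htan := rpow_sub_rpow_mul_le hα0 hv hvu
    rw [hdiff] at htan
    have hbv := mul_le_mul_of_nonneg_left (by linarith : b ≤ κ + b) hfac
    rw [IsComparable, min_eq_left (by linarith), max_eq_right (by linarith), hsplit]
    constructor
    · linarith [mul_nonneg hfac hb]
    · linear_combination hbv + htan
  · obtain rfl | hb₀ := hb.eq_or_lt
    · simp only [sub_zero, mul_zero] at hM ⊢
      exact ⟨mul_le_of_le_one_left hM (min_le_left _ _),
        le_mul_of_one_le_left hM (le_max_left _ _)⟩
    have hfac : (κ + x) ^ α - (κ + b) ^ α ≤ 0 :=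
      sub_nonpos.2 (Real.rpow_le_rpow_of_nonpos (by linarith) hvu hα0)
    have htan := mul_le_rpow_sub_rpow_mul hα hα0 hv hvu
    rw [hdiff] at htan
    have hbv := mul_le_mul_of_nonpos_left (by linarith : b ≤ κ + b) hfac
    rw [IsComparable, min_eq_right (by linarith), max_eq_left (by linarith), hsplit]
    constructor
    · linear_combination htan + hbv
    · linarith [mul_nonpos_of_nonpos_of_nonneg hfac hb]

lemma rpow_div_two_sq {w : ℝ} (hw : 0 ≤ w) (s : ℝ) : (w ^ (s / 2)) ^ 2 = w ^ s := by
  rw [← Real.rpow_mul_natCast hw]; norm_num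

noncomputable def lowerConst (p : ℝ) : ℝ := min 1 (p - 1) / max 1 (p / 2) ^ 2

noncomputable def upperConst (p : ℝ) : ℝ := max 2 (max 1 (p - 1) / min 1 (p / 2) ^ 2)

lemma lowerConst_pos {p : ℝ} (hp : 1 < p) : 0 < lowerConst p :=
  div_pos (lt_min one_pos (by linarith)) (by positivity)

lemma lowerConst_le_one (p : ℝ) : lowerConst p ≤ 1 :=
  div_le_one_of_le₀ ((min_le_left _ _).trans (one_le_pow₀ (le_max_left _ _))) (by positivity)

lemma two_le_upperConst (p : ℝ) : 2 ≤ upperConst p := le_max_left _ _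

lemma upperConst_pos (p : ℝ) : 0 < upperConst p := two_pos.trans_le (two_le_upperConst p)

variable {p κ : ℝ}

lemma comparable_sub_of_le (hp : 1 < p) (hκ : 0 ≤ κ) {a b : ℝ} (hb : 0 ≤ b) (hba : b ≤ a) :
    IsComparable (lowerConst p) (upperConst p)
      (((κ + a) ^ (p - 2) * a - (κ + b) ^ (p - 2) * b) * (a - b))
      (((κ + a) ^ ((p - 2) / 2) * a - (κ + b) ^ ((p - 2) / 2) * b) ^ 2) := by
  have hab : 0 ≤ a - b := sub_nonneg.2 hba
  have hS := (rpow_mul_sub_rpow_mul_comparable (α := p - 2) (by linarith) hκ hb hba).mul_right hab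
  have hV := (rpow_mul_sub_rpow_mul_comparable (α := (p - 2) / 2) (by linarith) hκ hb hba).sq
    (le_min zero_le_one (by linarith)) (mul_nonneg (Real.rpow_nonneg (by linarith) _) hab)
  rw [show p - 2 + 1 = p - 1 by ring] at hS
  rw [show (p - 2) / 2 + 1 = p / 2 by ring, mul_pow, rpow_div_two_sq (by linarith), pow_two (a - b),
    ← mul_assoc] at hV
  exact (hS.of_common hV (le_min zero_le_one (by linarith)) (le_max_of_le_left zero_le_one)
    (by positivity) (by positivity)).mono le_rfl (le_max_right _ _) (sq_nonneg _)

lemma comparable_sub (hp : 1 < p) (hκ : 0 ≤ κ) {a b : ℝ} (ha : 0 ≤ a) (hb : 0 ≤ b) :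
    IsComparable (lowerConst p) (upperConst p)
      (((κ + a) ^ (p - 2) * a - (κ + b) ^ (p - 2) * b) * (a - b))
      (((κ + a) ^ ((p - 2) / 2) * a - (κ + b) ^ ((p - 2) / 2) * b) ^ 2) := by
  rcases le_total b a with hba | hab
  · exact comparable_sub_of_le hp hκ hb hba
  · convert comparable_sub_of_le hp hκ ha hab using 1 <;> ring

lemma comparable_one_two_sq_add {α β a b : ℝ} (hα : 0 ≤ α) (hβ : 0 ≤ β) (ha : 0 ≤ a)
    (hb : 0 ≤ b) (hmono : 0 ≤ (α ^ 2 * a - β ^ 2 * b) * (a - b)) :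
    IsComparable 1 2 ((α ^ 2 * a + β ^ 2 * b) * (a + b)) ((α * a + β * b) ^ 2) :=
  ⟨by linear_combination mul_nonneg (sq_nonneg (α - β)) (mul_nonneg ha hb),
    by linear_combination hmono + 4 * mul_nonneg (mul_nonneg hα hβ) (mul_nonneg ha hb)⟩

lemma comparable_add (hp : 1 < p) (hκ : 0 ≤ κ) {a b : ℝ} (ha : 0 ≤ a) (hb : 0 ≤ b) :
    IsComparable (lowerConst p) (upperConst p)
      (((κ + a) ^ (p - 2) * a + (κ + b) ^ (p - 2) * b) * (a + b))
      (((κ + a) ^ ((p - 2) / 2) * a + (κ + b) ^ ((p - 2) / 2) * b) ^ 2) := by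
  have hmono := (mul_nonneg (lowerConst_pos hp).le (sq_nonneg _)).trans
    (comparable_sub hp hκ ha hb).1
  rw [← rpow_div_two_sq (w := κ + a) (by linarith), ← rpow_div_two_sq (w := κ + b) (by linarith)]
    at hmono ⊢
  exact (comparable_one_two_sq_add (Real.rpow_nonneg (by linarith) _)
    (Real.rpow_nonneg (by linarith) _) ha hb hmono).mono (lowerConst_le_one p)
    (two_le_upperConst p) (sq_nonneg _)

section InnerProductSpace

variable {E : Type*} [NormedAddCommGroup E] [InnerProductSpace ℝ E]

lemma inner_smul_sub_smul_sub (α β : ℝ) (x y : E) :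
    ⟪α • x - β • y, x - y⟫ = α * ‖x‖ ^ 2 + β * ‖y‖ ^ 2 - (α + β) * ⟪x, y⟫ := by
  simp only [inner_sub_left, inner_sub_right, real_inner_smul_left, real_inner_self_eq_norm_sq,
    real_inner_comm x y]
  ring

lemma norm_smul_sub_smul_sq (α β : ℝ) (x y : E) :
    ‖α • x - β • y‖ ^ 2 = α ^ 2 * ‖x‖ ^ 2 + β ^ 2 * ‖y‖ ^ 2 - 2 * (α * β) * ⟪x, y⟫ := by
  rw [norm_sub_sq_real, norm_smul, norm_smul, real_inner_smul_left, real_inner_smul_right,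
    mul_pow, mul_pow, Real.norm_eq_abs, Real.norm_eq_abs, sq_abs, sq_abs]
  ring

theorem isComparable_inner_norm_sq (hp : 1 < p) (hκ : 0 ≤ κ) (x y : E) :
    IsComparable (lowerConst p) (upperConst p)
      ⟪(κ + ‖x‖) ^ (p - 2) • x - (κ + ‖y‖) ^ (p - 2) • y, x - y⟫
      (‖(κ + ‖x‖) ^ ((p - 2) / 2) • x - (κ + ‖y‖) ^ ((p - 2) / 2) • y‖ ^ 2) := by
  rw [inner_smul_sub_smul_sub, norm_smul_sub_smul_sq]
  have hsub := comparable_sub hp hκ (norm_nonneg x) (norm_nonneg y)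
  have hadd := comparable_add hp hκ (norm_nonneg x) (norm_nonneg y)
  set a := ‖x‖
  set b := ‖y‖
  set A := (κ + a) ^ (p - 2)
  set B := (κ + b) ^ (p - 2)
  set α := (κ + a) ^ ((p - 2) / 2)
  set β := (κ + b) ^ ((p - 2) / 2)
  have key := IsComparable.of_abs_le (P₀ := A * a ^ 2 + B * b ^ 2) (P₁ := -(A + B))
    (Q₀ := α ^ 2 * a ^ 2 + β ^ 2 * b ^ 2) (Q₁ := -(2 * (α * β)))
    (by convert hsub using 1 <;> ring) (by convert hadd using 1 <;> ring)
    (abs_real_inner_le_norm x y)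
  convert key using 1 <;> ring

end InnerProductSpace

end VCoercivity

theorem V_coercivity_general (n N : ℕ) (p : ℝ) (hp : 1 < p) :
    ∃ c > (0 : ℝ), ∃ C > (0 : ℝ),
      ∀ κ : ℝ, 0 ≤ κ →
        ∀ ξ₁ ξ₂ : EuclideanSpace ℝ (Fin n × Fin N),
          c * ‖Vop n N p κ ξ₁ - Vop n N p κ ξ₂‖ ^ 2
              ≤ ⟪Sop n N p κ ξ₁ - Sop n N p κ ξ₂, ξ₁ - ξ₂⟫ ∧
          ⟪Sop n N p κ ξ₁ - Sop n N p κ ξ₂, ξ₁ - ξ₂⟫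
              ≤ C * ‖Vop n N p κ ξ₁ - Vop n N p κ ξ₂‖ ^ 2 :=
  ⟨VCoercivity.lowerConst p, VCoercivity.lowerConst_pos hp,
    VCoercivity.upperConst p, VCoercivity.upperConst_pos p,
    fun _ hκ ξ₁ ξ₂ => VCoercivity.isComparable_inner_norm_sq hp hκ ξ₁ ξ₂⟩

/-- **V-coercivity.**  There are constants `c, C > 0` depending only on `p` (and `n, N`)
such that for all `κ ≥ 0` and all matrices `ξ₁, ξ₂`,
`c |V(ξ₁) - V(ξ₂)|² ≤ (S(ξ₁) - S(ξ₂)) : (ξ₁ - ξ₂) ≤ C |V(ξ₁) - V(ξ₂)|²`. -/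
theorem V_coercivity (n N : ℕ) (hn : 1 ≤ n) (hN : 1 ≤ N) (p : ℝ) (hp : 1 < p) :
    ∃ c > (0 : ℝ), ∃ C > (0 : ℝ),
      ∀ κ : ℝ, 0 ≤ κ →
        ∀ ξ₁ ξ₂ : EuclideanSpace ℝ (Fin n × Fin N),
          c * ‖Vop n N p κ ξ₁ - Vop n N p κ ξ₂‖ ^ 2
              ≤ ⟪Sop n N p κ ξ₁ - Sop n N p κ ξ₂, ξ₁ - ξ₂⟫ ∧
          ⟪Sop n N p κ ξ₁ - Sop n N p κ ξ₂, ξ₁ - ξ₂⟫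
              ≤ C * ‖Vop n N p κ ξ₁ - Vop n N p κ ξ₂‖ ^ 2 :=
  V_coercivity_general n N p hp
end

section
/- (Generalized Young inequality) For every p ∈ (1,∞) and every δ > 0 there exists a constant c_δ ≥ 1, depending only on p and δ (and the dimensions n, N), such that for every κ ≥ 0 and all matrices ξ₁, ξ₂, ξ₃ ∈ ℝ^{n×N} one has (S(ξ₁) − S(ξ₂)) : (ξ₂ − ξ₃) ≤ δ·|V(ξ₁) − V(ξ₂)|² + c_δ·|V(ξ₂) − V(ξ₃)|². -/
open scoped RealInnerProductSpace

/-!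
Write `A = κ + |ξ₁| + |ξ₂|`, `B = κ + |ξ₂| + |ξ₃|`, `D = |ξ₁ - ξ₂|`, `T = |ξ₂ - ξ₃|`. The two
standard equivalences `|S(ξ) - S(η)| ≲ (κ + |ξ| + |η|)^(p-2) |ξ - η|` and
`|V(ξ) - V(η)|² ≳ (κ + |ξ| + |η|)^(p-2) |ξ - η|²` reduce the claim, after Cauchy–Schwarz, to
`A^(p-2) D T ≤ δ' A^(p-2) D² + K B^(p-2) T²`. With `s = κ + |ξ₂|`, the shifts `s + D` and `s + T`
are within a factor 2 of `A` and `B`, and for them this is Young's inequality for the shifted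
power: if `T ≤ δ' D` it is immediate, and otherwise `D ≲ T` and `t ↦ (s + t)^(p-2) t` is increasing.

Both equivalences follow from bounds on increments of `h(t) = (κ + t)^r t`, which come from the
tangent-line inequalities for `t ↦ t^(1+r)`. The passage from the norms to the vectors uses that
`‖α x - β y‖²` and `‖x - y‖²` are affine in `⟪x, y⟫ ∈ [-|x||y|, |x||y|]`, so they need only be
compared at the two endpoints, where they become `(α|x| ± β|y|)²` and `(|x| ± |y|)²`.
-/

open Real

theorem rpow_tangent_le_rpow_of_one_le {s x y : ℝ} (hs : 1 ≤ s) (hx : 0 < x) (hy : 0 ≤ y) :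
    x ^ s + s * x ^ (s - 1) * (y - x) ≤ y ^ s := by
  have h := one_add_mul_self_le_rpow_one_add (s := y / x - 1)
    (by linarith [div_nonneg hy hx.le]) hs
  rw [add_sub_cancel, div_rpow hy hx.le, le_div_iff₀ (rpow_pos_of_pos hx s)] at h
  rw [rpow_sub_one hx.ne']
  calc _ = (1 + s * (y / x - 1)) * x ^ s := by field_simp
    _ ≤ y ^ s := h

theorem rpow_le_rpow_tangent_of_le_one {s x y : ℝ} (hs₀ : 0 ≤ s) (hs₁ : s ≤ 1) (hx : 0 < x)
    (hy : 0 ≤ y) : y ^ s ≤ x ^ s + s * x ^ (s - 1) * (y - x) := by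
  have h := rpow_one_add_le_one_add_mul_self (s := y / x - 1)
    (by linarith [div_nonneg hy hx.le]) hs₀ hs₁
  rw [add_sub_cancel, div_rpow hy hx.le, div_le_iff₀ (rpow_pos_of_pos hx s)] at h
  rw [rpow_sub_one hx.ne']
  calc y ^ s ≤ (1 + s * (y / x - 1)) * x ^ s := h
    _ = _ := by field_simp

section ShiftedPower

variable {κ r a b : ℝ}

theorem rpow_mul_sub_rpow_mul_le (hκ : 0 ≤ κ) (hb : 0 ≤ b) (hba : b ≤ a) :
    (κ + a) ^ r * a - (κ + b) ^ r * b ≤ max 1 (1 + r) * (κ + a) ^ r * (a - b) := by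
  have hxr : 0 ≤ (κ + a) ^ r := rpow_nonneg (by linarith) r
  have hm := mul_le_mul_of_nonneg_right (le_max_left 1 (1 + r)) (mul_nonneg hxr (sub_nonneg.2 hba))
  rcases hb.eq_or_lt with rfl | hb
  · rw [mul_zero, sub_zero, sub_zero]
    linarith
  have hy : 0 < κ + b := by linarith
  rcases le_total r 0 with hr | hr
  · have hxy : (κ + a) ^ r ≤ (κ + b) ^ r := rpow_le_rpow_of_nonpos hy (by linarith) hr
    linarith [mul_le_mul_of_nonneg_right hxy hb.le]
  · have hxy : (κ + b) ^ r ≤ (κ + a) ^ r := rpow_le_rpow hy.le (by linarith) hr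
    have htan := rpow_tangent_le_rpow_of_one_le (s := 1 + r) (by linarith)
      (by linarith : 0 < κ + a) hy.le
    rw [add_sub_cancel_left, rpow_add (by linarith : 0 < κ + a), rpow_add hy, rpow_one,
      rpow_one] at htan
    rw [max_eq_right (by linarith)]
    linarith [mul_le_mul_of_nonneg_left hxy hκ]

theorem le_rpow_mul_sub_rpow_mul (hr : -1 ≤ r) (hκ : 0 ≤ κ) (hb : 0 ≤ b) (hba : b ≤ a) :
    min 1 (1 + r) * (κ + a) ^ r * (a - b) ≤ (κ + a) ^ r * a - (κ + b) ^ r * b := by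
  have hxr : 0 ≤ (κ + a) ^ r := rpow_nonneg (by linarith) r
  have hm := mul_le_mul_of_nonneg_right (min_le_left 1 (1 + r)) (mul_nonneg hxr (sub_nonneg.2 hba))
  rcases hb.eq_or_lt with rfl | hb
  · rw [mul_zero, sub_zero, sub_zero]
    linarith
  have hy : 0 < κ + b := by linarith
  rcases le_total 0 r with hr₀ | hr₀
  · have hxy : (κ + b) ^ r ≤ (κ + a) ^ r := rpow_le_rpow hy.le (by linarith) hr₀
    linarith [mul_le_mul_of_nonneg_right hxy hb.le]
  · have hxy : (κ + a) ^ r ≤ (κ + b) ^ r := rpow_le_rpow_of_nonpos hy (by linarith) hr₀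
    have htan := rpow_le_rpow_tangent_of_le_one (s := 1 + r) (by linarith) (by linarith)
      (by linarith : 0 < κ + a) hy.le
    rw [add_sub_cancel_left, rpow_add (by linarith : 0 < κ + a), rpow_add hy, rpow_one,
      rpow_one] at htan
    rw [min_eq_right (by linarith)]
    linarith [mul_le_mul_of_nonneg_left hxy hκ]

theorem rpow_mul_le_rpow_mul (hr : -1 ≤ r) (hκ : 0 ≤ κ) (hb : 0 ≤ b) (hba : b ≤ a) :
    (κ + b) ^ r * b ≤ (κ + a) ^ r * a := by
  have h := le_rpow_mul_sub_rpow_mul hr hκ hb hba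
  have : 0 ≤ min 1 (1 + r) * (κ + a) ^ r * (a - b) :=
    mul_nonneg (mul_nonneg (le_min zero_le_one (by linarith)) (rpow_nonneg (by linarith) r))
      (by linarith)
  linarith

end ShiftedPower

theorem rpow_le_rpow_abs_mul_rpow {x y l r : ℝ} (hx : 0 ≤ x) (hy : 0 ≤ y) (hl : 1 ≤ l)
    (hxy : x ≤ l * y) (hyx : y ≤ l * x) : x ^ r ≤ l ^ |r| * y ^ r := by
  rcases hy.eq_or_lt with rfl | hy
  · obtain rfl : x = 0 := by linarith
    exact le_mul_of_one_le_left (rpow_nonneg le_rfl r) (one_le_rpow hl (abs_nonneg r))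
  rcases le_total 0 r with hr | hr
  · rw [abs_of_nonneg hr, ← mul_rpow (by linarith) hy.le]
    exact rpow_le_rpow hx hxy hr
  · have hl₀ : 0 < l := by linarith
    rw [abs_of_nonpos hr, rpow_neg hl₀.le, ← inv_rpow hl₀.le,
      ← mul_rpow (inv_nonneg.2 hl₀.le) hy.le]
    refine rpow_le_rpow_of_nonpos (by positivity) ?_ hr
    rw [inv_mul_le_iff₀ hl₀]
    exact hyx

theorem young_inequality_shifted_rpow {q δ s D T : ℝ} (hq : -1 ≤ q) (hδ : 0 < δ) (hs : 0 ≤ s)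
    (hD : 0 ≤ D) (hT : 0 ≤ T) :
    (s + D) ^ q * D * T
      ≤ δ * ((s + D) ^ q * D ^ 2) + max 1 δ⁻¹ ^ (|q| + 1) * ((s + T) ^ q * T ^ 2) := by
  set l := max 1 δ⁻¹
  have hl : 1 ≤ l := le_max_left _ _
  rcases le_total T (δ * D) with h | h
  · have : 0 ≤ l ^ (|q| + 1) * ((s + T) ^ q * T ^ 2) := by positivity
    calc (s + D) ^ q * D * T ≤ (s + D) ^ q * D * (δ * D) := by gcongr
      _ = δ * ((s + D) ^ q * D ^ 2) := by ring
      _ ≤ _ := le_add_of_nonneg_right this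
  · have hDT : D ≤ l * T :=
      calc D = δ⁻¹ * (δ * D) := by field_simp
        _ ≤ l * T := by gcongr; exact le_max_right _ _
    have hmono := rpow_mul_le_rpow_mul hq hs hD hDT
    have hcomp : (s + l * T) ^ q ≤ l ^ |q| * (s + T) ^ q :=
      rpow_le_rpow_abs_mul_rpow (by positivity) (by positivity) hl (by nlinarith) (by nlinarith)
    have : 0 ≤ δ * ((s + D) ^ q * D ^ 2) := by positivity
    calc (s + D) ^ q * D * T ≤ (s + l * T) ^ q * (l * T) * T := by gcongr
      _ ≤ l ^ |q| * (s + T) ^ q * (l * T) * T := by gcongr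
      _ = l ^ (|q| + 1) * ((s + T) ^ q * T ^ 2) := by
        rw [rpow_add_one (by positivity)]; ring
      _ ≤ _ := le_add_of_nonneg_left this

section Normed

variable {E : Type*} [SeminormedAddCommGroup E]

theorem exists_young_inequality_shifted_norm {q δ : ℝ} (hq : -1 ≤ q) (hδ : 0 < δ) :
    ∃ K ≥ 0, ∀ κ, 0 ≤ κ → ∀ x y z : E,
      (κ + ‖x‖ + ‖y‖) ^ q * ‖x - y‖ * ‖y - z‖
        ≤ δ * ((κ + ‖x‖ + ‖y‖) ^ q * ‖x - y‖ ^ 2) + K * ((κ + ‖y‖ + ‖z‖) ^ q * ‖y - z‖ ^ 2) := by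
  set c : ℝ := 2 ^ |q|
  have hc : 0 < c := by positivity
  set l := max 1 (δ / c ^ 2)⁻¹
  refine ⟨c ^ 2 * l ^ (|q| + 1), by positivity, fun κ hκ x y z => ?_⟩
  have hxy := norm_sub_le x y
  have hyz := norm_sub_le y z
  have hD := norm_nonneg (x - y)
  have hT := norm_nonneg (y - z)
  have hx₀ := norm_nonneg x
  have hy₀ := norm_nonneg y
  have hz₀ := norm_nonneg z
  have hx := norm_le_norm_add_norm_sub' x y
  have hz := norm_le_norm_add_norm_sub' z y
  rw [norm_sub_rev z] at hz
  have h₁ : (κ + ‖x‖ + ‖y‖) ^ q ≤ c * (κ + ‖y‖ + ‖x - y‖) ^ q :=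
    rpow_le_rpow_abs_mul_rpow (by positivity) (by positivity) one_le_two (by linarith) (by linarith)
  have h₂ : (κ + ‖y‖ + ‖x - y‖) ^ q ≤ c * (κ + ‖x‖ + ‖y‖) ^ q :=
    rpow_le_rpow_abs_mul_rpow (by positivity) (by positivity) one_le_two (by linarith) (by linarith)
  have h₃ : (κ + ‖y‖ + ‖y - z‖) ^ q ≤ c * (κ + ‖y‖ + ‖z‖) ^ q :=
    rpow_le_rpow_abs_mul_rpow (by positivity) (by positivity) one_le_two (by linarith) (by linarith)
  have hY := young_inequality_shifted_rpow hq (div_pos hδ (pow_pos hc 2))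
    (by positivity : 0 ≤ κ + ‖y‖) hD hT
  calc (κ + ‖x‖ + ‖y‖) ^ q * ‖x - y‖ * ‖y - z‖
      ≤ c * ((κ + ‖y‖ + ‖x - y‖) ^ q * ‖x - y‖ * ‖y - z‖) := by
        linarith [mul_le_mul_of_nonneg_right h₁ (mul_nonneg hD hT)]
    _ ≤ c * (δ / c ^ 2 * ((κ + ‖y‖ + ‖x - y‖) ^ q * ‖x - y‖ ^ 2)
          + l ^ (|q| + 1) * ((κ + ‖y‖ + ‖y - z‖) ^ q * ‖y - z‖ ^ 2)) := by gcongr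
    _ ≤ c * (δ / c ^ 2 * (c * (κ + ‖x‖ + ‖y‖) ^ q * ‖x - y‖ ^ 2)
          + l ^ (|q| + 1) * (c * (κ + ‖y‖ + ‖z‖) ^ q * ‖y - z‖ ^ 2)) := by gcongr
    _ = _ := by field_simp

end Normed

section InnerProduct

variable {E : Type*} [NormedAddCommGroup E] [InnerProductSpace ℝ E]

theorem norm_smul_sub_smul_sq (α β : ℝ) (x y : E) :
    ‖α • x - β • y‖ ^ 2 = α ^ 2 * ‖x‖ ^ 2 - 2 * (α * β) * ⟪x, y⟫ + β ^ 2 * ‖y‖ ^ 2 := by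
  rw [norm_sub_sq_real, norm_smul, norm_smul, inner_smul_left, inner_smul_right, Real.norm_eq_abs,
    Real.norm_eq_abs, mul_pow, mul_pow, sq_abs, sq_abs, conj_trivial]
  ring

theorem norm_smul_sub_smul_le_of_endpoints {α β M : ℝ} {x y : E} (hα : 0 ≤ α) (hβ : 0 ≤ β)
    (hM : 0 ≤ M) (hsum : α * ‖x‖ + β * ‖y‖ ≤ M * (‖x‖ + ‖y‖))
    (hdiff : |α * ‖x‖ - β * ‖y‖| ≤ M * |‖x‖ - ‖y‖|) :
    ‖α • x - β • y‖ ≤ M * ‖x - y‖ := by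
  have hsum₂ := pow_le_pow_left₀ (by positivity) hsum 2
  have hdiff₂ : (α * ‖x‖ - β * ‖y‖) ^ 2 ≤ (M * (‖x‖ - ‖y‖)) ^ 2 := by
    rwa [sq_le_sq, abs_mul, abs_of_nonneg hM]
  have hs := abs_le.1 (abs_real_inner_le_norm x y)
  rw [← pow_le_pow_iff_left₀ (norm_nonneg _) (by positivity) two_ne_zero, mul_pow,
    norm_smul_sub_smul_sq, norm_sub_sq_real]
  rcases le_total (α * β) (M ^ 2) with h | h
  · nlinarith [mul_le_mul_of_nonneg_left hs.2 (sub_nonneg.2 h)]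
  · nlinarith [mul_le_mul_of_nonneg_left hs.1 (sub_nonneg.2 h)]

theorem le_norm_smul_sub_smul_of_endpoints {α β m : ℝ} {x y : E} (hm : 0 ≤ m)
    (hsum : m * (‖x‖ + ‖y‖) ≤ α * ‖x‖ + β * ‖y‖)
    (hdiff : m * |‖x‖ - ‖y‖| ≤ |α * ‖x‖ - β * ‖y‖|) :
    m * ‖x - y‖ ≤ ‖α • x - β • y‖ := by
  have hsum₂ := pow_le_pow_left₀ (by positivity) hsum 2
  have hdiff₂ : (m * (‖x‖ - ‖y‖)) ^ 2 ≤ (α * ‖x‖ - β * ‖y‖) ^ 2 := by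
    rwa [sq_le_sq, abs_mul, abs_of_nonneg hm]
  have hs := abs_le.1 (abs_real_inner_le_norm x y)
  rw [← pow_le_pow_iff_left₀ (by positivity) (norm_nonneg _) two_ne_zero, mul_pow,
    norm_smul_sub_smul_sq, norm_sub_sq_real]
  rcases le_total (α * β) (m ^ 2) with h | h
  · nlinarith [mul_le_mul_of_nonneg_left hs.1 (sub_nonneg.2 h)]
  · nlinarith [mul_le_mul_of_nonneg_left hs.2 (sub_nonneg.2 h)]

section RpowSmul

variable {κ r : ℝ}

theorem norm_rpow_smul_sub_rpow_smul_le (hr : -1 ≤ r) (hκ : 0 ≤ κ) (x y : E) :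
    ‖(κ + ‖x‖) ^ r • x - (κ + ‖y‖) ^ r • y‖
      ≤ 2 ^ |r| * max 2 (1 + r) * (κ + ‖x‖ + ‖y‖) ^ r * ‖x - y‖ := by
  wlog hyx : ‖y‖ ≤ ‖x‖ generalizing x y
  · rw [norm_sub_rev x, norm_sub_rev ((κ + ‖x‖) ^ r • x), add_right_comm]
    exact this y x (le_of_not_ge hyx)
  have hy := norm_nonneg y
  have hcomp : (κ + ‖x‖) ^ r ≤ 2 ^ |r| * (κ + ‖x‖ + ‖y‖) ^ r :=
    rpow_le_rpow_abs_mul_rpow (by positivity) (by positivity) one_le_two (by linarith)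
      (by linarith)
  have hmono := rpow_mul_le_rpow_mul hr hκ hy hyx
  refine norm_smul_sub_smul_le_of_endpoints (rpow_nonneg (by positivity) r)
    (rpow_nonneg (by positivity) r) (by positivity) ?_ ?_
  · calc (κ + ‖x‖) ^ r * ‖x‖ + (κ + ‖y‖) ^ r * ‖y‖
        ≤ 2 * ((κ + ‖x‖) ^ r * ‖x‖) := by linarith
      _ ≤ 2 * (2 ^ |r| * (κ + ‖x‖ + ‖y‖) ^ r * ‖x‖) := by gcongr
      _ = 2 ^ |r| * 2 * (κ + ‖x‖ + ‖y‖) ^ r * ‖x‖ := by ring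
      _ ≤ 2 ^ |r| * max 2 (1 + r) * (κ + ‖x‖ + ‖y‖) ^ r * (‖x‖ + ‖y‖) := by
        gcongr
        · exact le_max_left _ _
        · linarith
  · rw [abs_of_nonneg (sub_nonneg.2 hmono), abs_of_nonneg (sub_nonneg.2 hyx)]
    calc (κ + ‖x‖) ^ r * ‖x‖ - (κ + ‖y‖) ^ r * ‖y‖
        ≤ max 1 (1 + r) * (κ + ‖x‖) ^ r * (‖x‖ - ‖y‖) := rpow_mul_sub_rpow_mul_le hκ hy hyx
      _ ≤ max 2 (1 + r) * (2 ^ |r| * (κ + ‖x‖ + ‖y‖) ^ r) * (‖x‖ - ‖y‖) := by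
        gcongr
        norm_num
      _ = _ := by ring

theorem le_norm_rpow_smul_sub_rpow_smul (hr : -1 ≤ r) (hκ : 0 ≤ κ) (x y : E) :
    min 1 (1 + r) / (2 * 2 ^ |r|) * (κ + ‖x‖ + ‖y‖) ^ r * ‖x - y‖
      ≤ ‖(κ + ‖x‖) ^ r • x - (κ + ‖y‖) ^ r • y‖ := by
  wlog hyx : ‖y‖ ≤ ‖x‖ generalizing x y
  · rw [norm_sub_rev x, norm_sub_rev ((κ + ‖x‖) ^ r • x), add_right_comm]
    exact this y x (le_of_not_ge hyx)
  have hy := norm_nonneg y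
  have hcomp : (κ + ‖x‖ + ‖y‖) ^ r ≤ 2 ^ |r| * (κ + ‖x‖) ^ r :=
    rpow_le_rpow_abs_mul_rpow (by positivity) (by positivity) one_le_two (by linarith)
      (by linarith)
  have hβ : 0 ≤ (κ + ‖y‖) ^ r * ‖y‖ := mul_nonneg (rpow_nonneg (by positivity) r) hy
  have hmono := rpow_mul_le_rpow_mul hr hκ hy hyx
  have hdiff := le_rpow_mul_sub_rpow_mul hr hκ hy hyx
  have hmin : 0 ≤ min 1 (1 + r) := le_min zero_le_one (by linarith)
  have hm : min 1 (1 + r) / (2 * 2 ^ |r|) * (κ + ‖x‖ + ‖y‖) ^ r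
      ≤ min 1 (1 + r) * (κ + ‖x‖) ^ r / 2 := by
    calc _ ≤ min 1 (1 + r) / (2 * 2 ^ |r|) * (2 ^ |r| * (κ + ‖x‖) ^ r) := by gcongr
      _ = _ := by field_simp
  refine le_norm_smul_sub_smul_of_endpoints
    (mul_nonneg (div_nonneg hmin (by positivity)) (rpow_nonneg (by positivity) r)) ?_ ?_
  · calc _ ≤ min 1 (1 + r) * (κ + ‖x‖) ^ r / 2 * (‖x‖ + ‖y‖) := by gcongr
      _ = min 1 (1 + r) * ((κ + ‖x‖) ^ r * ((‖x‖ + ‖y‖) / 2)) := by ring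
      _ ≤ 1 * ((κ + ‖x‖) ^ r * ‖x‖) := by
        gcongr
        · exact min_le_left _ _
        · linarith
      _ ≤ _ := by linarith
  · rw [abs_of_nonneg (sub_nonneg.2 hyx), abs_of_nonneg (sub_nonneg.2 hmono)]
    have : 0 ≤ min 1 (1 + r) * (κ + ‖x‖) ^ r * (‖x‖ - ‖y‖) :=
      mul_nonneg (mul_nonneg hmin (rpow_nonneg (by positivity) r)) (sub_nonneg.2 hyx)
    calc _ ≤ min 1 (1 + r) * (κ + ‖x‖) ^ r / 2 * (‖x‖ - ‖y‖) := by gcongr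
      _ ≤ min 1 (1 + r) * (κ + ‖x‖) ^ r * (‖x‖ - ‖y‖) := by linarith
      _ ≤ _ := hdiff

end RpowSmul

end InnerProduct

theorem exists_norm_Sop_sub_le (n N : ℕ) {p : ℝ} (hp : 1 < p) :
    ∃ C > 0, ∀ κ, 0 ≤ κ → ∀ ξ η : EuclideanSpace ℝ (Fin n × Fin N),
      ‖Sop n N p κ ξ - Sop n N p κ η‖ ≤ C * ((κ + ‖ξ‖ + ‖η‖) ^ (p - 2) * ‖ξ - η‖) :=
  ⟨2 ^ |p - 2| * max 2 (1 + (p - 2)), by positivity, fun κ hκ ξ η =>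
    (norm_rpow_smul_sub_rpow_smul_le (by linarith) hκ ξ η).trans_eq (by ring)⟩

theorem exists_mul_le_norm_Vop_sub_sq (n N : ℕ) {p : ℝ} (hp : 1 < p) :
    ∃ c > 0, ∀ κ, 0 ≤ κ → ∀ ξ η : EuclideanSpace ℝ (Fin n × Fin N),
      c * ((κ + ‖ξ‖ + ‖η‖) ^ (p - 2) * ‖ξ - η‖ ^ 2) ≤ ‖Vop n N p κ ξ - Vop n N p κ η‖ ^ 2 := by
  set c := min 1 (1 + (p - 2) / 2) / (2 * 2 ^ |(p - 2) / 2|)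
  have hc : 0 < c := div_pos (lt_min one_pos (by linarith)) (by positivity)
  refine ⟨c ^ 2, by positivity, fun κ hκ ξ η => ?_⟩
  have hV := le_norm_rpow_smul_sub_rpow_smul (r := (p - 2) / 2) (by linarith) hκ ξ η
  have hA : (κ + ‖ξ‖ + ‖η‖) ^ (p - 2) = ((κ + ‖ξ‖ + ‖η‖) ^ ((p - 2) / 2)) ^ 2 := by
    rw [← rpow_mul_natCast (by positivity)]
    norm_num
  calc c ^ 2 * ((κ + ‖ξ‖ + ‖η‖) ^ (p - 2) * ‖ξ - η‖ ^ 2)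
      = (c * (κ + ‖ξ‖ + ‖η‖) ^ ((p - 2) / 2) * ‖ξ - η‖) ^ 2 := by rw [hA]; ring
    _ ≤ ‖Vop n N p κ ξ - Vop n N p κ η‖ ^ 2 :=
      pow_le_pow_left₀ (mul_nonneg (mul_nonneg hc.le (rpow_nonneg (by positivity) _))
        (norm_nonneg _)) hV 2

theorem generalized_young_general (n N : ℕ) (p : ℝ) (hp : 1 < p)
    (δ : ℝ) (hδ : 0 < δ) :
    ∃ cδ : ℝ, 1 ≤ cδ ∧
      ∀ κ : ℝ, 0 ≤ κ →
        ∀ ξ₁ ξ₂ ξ₃ : EuclideanSpace ℝ (Fin n × Fin N),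
          ⟪Sop n N p κ ξ₁ - Sop n N p κ ξ₂, ξ₂ - ξ₃⟫
            ≤ δ * ‖Vop n N p κ ξ₁ - Vop n N p κ ξ₂‖ ^ 2
              + cδ * ‖Vop n N p κ ξ₂ - Vop n N p κ ξ₃‖ ^ 2 := by
  obtain ⟨C, hC, hS⟩ := exists_norm_Sop_sub_le n N hp
  obtain ⟨c, hc, hV⟩ := exists_mul_le_norm_Vop_sub_sq n N hp
  obtain ⟨K, hK, hY⟩ := exists_young_inequality_shifted_norm (E := EuclideanSpace ℝ (Fin n × Fin N))
    (q := p - 2) (by linarith) (δ := δ * c / C) (by positivity)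
  refine ⟨max 1 (C * K / c), le_max_left _ _, fun κ hκ ξ₁ ξ₂ ξ₃ => ?_⟩
  calc ⟪Sop n N p κ ξ₁ - Sop n N p κ ξ₂, ξ₂ - ξ₃⟫
      ≤ ‖Sop n N p κ ξ₁ - Sop n N p κ ξ₂‖ * ‖ξ₂ - ξ₃‖ := real_inner_le_norm _ _
    _ ≤ C * ((κ + ‖ξ₁‖ + ‖ξ₂‖) ^ (p - 2) * ‖ξ₁ - ξ₂‖) * ‖ξ₂ - ξ₃‖ := by
      gcongr
      exact hS κ hκ ξ₁ ξ₂
    _ = C * ((κ + ‖ξ₁‖ + ‖ξ₂‖) ^ (p - 2) * ‖ξ₁ - ξ₂‖ * ‖ξ₂ - ξ₃‖) := by ring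
    _ ≤ C * (δ * c / C * ((κ + ‖ξ₁‖ + ‖ξ₂‖) ^ (p - 2) * ‖ξ₁ - ξ₂‖ ^ 2)
          + K * ((κ + ‖ξ₂‖ + ‖ξ₃‖) ^ (p - 2) * ‖ξ₂ - ξ₃‖ ^ 2)) := by
      gcongr
      exact hY κ hκ ξ₁ ξ₂ ξ₃
    _ = δ * (c * ((κ + ‖ξ₁‖ + ‖ξ₂‖) ^ (p - 2) * ‖ξ₁ - ξ₂‖ ^ 2))
          + C * K / c * (c * ((κ + ‖ξ₂‖ + ‖ξ₃‖) ^ (p - 2) * ‖ξ₂ - ξ₃‖ ^ 2)) := by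
      field_simp
    _ ≤ δ * ‖Vop n N p κ ξ₁ - Vop n N p κ ξ₂‖ ^ 2
          + max 1 (C * K / c) * ‖Vop n N p κ ξ₂ - Vop n N p κ ξ₃‖ ^ 2 := by
      gcongr
      · exact hV κ hκ ξ₁ ξ₂
      · exact le_max_right _ _
      · exact hV κ hκ ξ₂ ξ₃

/-- **Generalized Young inequality.**  For each `p ∈ (1,∞)` and `δ > 0` there is a
constant `c_δ ≥ 1` depending only on `p`, `δ` (and `n, N`) such that for all `κ ≥ 0`
and all matrices `ξ₁, ξ₂, ξ₃`,
`(S(ξ₁) - S(ξ₂)) : (ξ₂ - ξ₃) ≤ δ |V(ξ₁) - V(ξ₂)|² + c_δ |V(ξ₂) - V(ξ₃)|²`. -/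
theorem generalized_young (n N : ℕ) (hn : 1 ≤ n) (hN : 1 ≤ N) (p : ℝ) (hp : 1 < p)
    (δ : ℝ) (hδ : 0 < δ) :
    ∃ cδ : ℝ, 1 ≤ cδ ∧
      ∀ κ : ℝ, 0 ≤ κ →
        ∀ ξ₁ ξ₂ ξ₃ : EuclideanSpace ℝ (Fin n × Fin N),
          ⟪Sop n N p κ ξ₁ - Sop n N p κ ξ₂, ξ₂ - ξ₃⟫
            ≤ δ * ‖Vop n N p κ ξ₁ - Vop n N p κ ξ₂‖ ^ 2
              + cδ * ‖Vop n N p κ ξ₂ - Vop n N p κ ξ₃‖ ^ 2 :=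
  generalized_young_general n N p hp δ hδ
end

section
/- (One-sided Young-type inequality) For every p ∈ (1,∞) and every δ > 0 there exists a constant c_δ ≥ 1, depending only on p and δ (and the dimensions n, N), such that for every κ ≥ 0 and all matrices ξ₁, ξ₂, ξ₃ ∈ ℝ^{n×N} one has (S(ξ₁) − S(ξ₂)) : ξ₃ ≤ δ·|V(ξ₁) − V(ξ₂)|² + c_δ·(κ + |ξ₁| + |ξ₁ − ξ₂|)^{p−2}|ξ₃|², where the last term is interpreted as 0 when κ = 0, ξ₁ = ξ₂ = 0 and ξ₃ = 0. -/
open scoped RealInnerProductSpace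

private lemma amgm {r θ : ℝ} (hr : 0 ≤ r) (h0 : 0 ≤ θ) (h1 : θ ≤ 1) :
    r ^ θ ≤ θ * r + (1 - θ) := by
  have h := Real.geom_mean_le_arith_mean2_weighted h0 (by linarith : (0:ℝ) ≤ 1 - θ) hr
    zero_le_one (by ring)
  simpa using h

private lemma Ra {r s : ℝ} (hr0 : 0 < r) (hr1 : r ≤ 1) (hs : 0 ≤ s) :
    (1 - r ^ s) * r ^ (s + 1) ≤ s * (1 - r) := by
  rcases le_or_gt s 1 with h1 | h1
  · have hA : r ^ (1 - s) ≤ (1 - s) * r + s := by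
      have := amgm hr0.le (by linarith : (0:ℝ) ≤ 1 - s) (by linarith)
      linarith
    have hge : r ≤ r ^ (1 - s) := by
      have := Real.rpow_le_rpow_of_exponent_ge hr0 hr1 (show 1 - s ≤ 1 by linarith)
      simpa using this
    have h2s : r ^ (2*s) ≤ 1 := Real.rpow_le_one hr0.le hr1 (by linarith)
    have h2snn : 0 ≤ r ^ (2*s) := Real.rpow_nonneg hr0.le _
    have hid : (1 - r ^ s) * r ^ (s + 1) = r ^ (2*s) * (r ^ (1-s) - r) := by
      have e1 : r ^ (s+1) = r ^ s * r := by
        rw [Real.rpow_add hr0, Real.rpow_one]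
      have e2 : r ^ (2*s) = r ^ s * r ^ s := by
        rw [show 2*s = s + s by ring, Real.rpow_add hr0]
      have e3 : r ^ (1-s) * r ^ s = r := by
        rw [← Real.rpow_add hr0]; norm_num
      rw [e1, e2]
      nlinarith [e3]
    rw [hid]
    nlinarith [mul_le_mul_of_nonneg_left (show r ^ (1-s) - r ≤ s * (1-r) by linarith) h2snn]
  · have hb : 1 - r ^ s ≤ s * (1 - r) := by
      have h := one_add_mul_self_le_rpow_one_add (s := r - 1) (by linarith) h1.le
      have h' : (1 : ℝ) + (r - 1) = r := by ring
      rw [h'] at h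
      linarith
    have h01 : r ^ s ≤ 1 := Real.rpow_le_one hr0.le hr1 (by linarith)
    have hle1 : r ^ (s+1) ≤ 1 := Real.rpow_le_one hr0.le hr1 (by linarith)
    have hnn : 0 ≤ r ^ (s+1) := Real.rpow_nonneg hr0.le _
    nlinarith

private lemma Rb {r s : ℝ} (hr0 : 0 < r) (hr1 : r ≤ 1) (hs0 : -(1/2) < s) (hs1 : s < 0) :
    (r ^ s - 1) * r ^ (s + 1) ≤ 1 - r := by
  have h1 : r ≤ r ^ (s+1) := by
    have := Real.rpow_le_rpow_of_exponent_ge hr0 hr1 (show s + 1 ≤ 1 by linarith)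
    simpa using this
  have h2 : r ^ (2*s+1) ≤ (2*s+1) * r + (1 - (2*s+1)) :=
    amgm hr0.le (by linarith) (by linarith)
  have hid : (r ^ s - 1) * r ^ (s+1) = r ^ (2*s+1) - r ^ (s+1) := by
    have e : r ^ (2*s+1) = r ^ s * r ^ (s+1) := by
      rw [← Real.rpow_add hr0]; ring_nf
    rw [e]; ring
  rw [hid]
  nlinarith

private lemma L1 {u v s : ℝ} (hv : 0 < v) (hvu : v ≤ u) (hs1 : -1 < s) (hs2 : s < 0) :
    (v ^ s - u ^ s) * v ≤ (-s) * (u ^ s * (u - v)) := by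
  have hu : 0 < u := lt_of_lt_of_le hv hvu
  have hgm : v ^ (1+s) * u ^ (-s) ≤ (1+s) * v + (-s) * u :=
    Real.geom_mean_le_arith_mean2_weighted (by linarith) (by linarith) hv.le hu.le (by ring)
  have hus : 0 ≤ u ^ s := Real.rpow_nonneg hu.le s
  have e1 : v ^ (1+s) = v * v ^ s := by
    rw [Real.rpow_add hv, Real.rpow_one]
  have e2 : u ^ (-s) * u ^ s = 1 := by
    rw [← Real.rpow_add hu]; norm_num
  have h3 : v * v ^ s ≤ ((1+s) * v + (-s) * u) * u ^ s := by
    have := mul_le_mul_of_nonneg_right hgm hus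
    calc v * v ^ s = v ^ (1+s) * (u ^ (-s) * u ^ s) := by rw [e1, e2]; ring
      _ = v ^ (1+s) * u ^ (-s) * u ^ s := by ring
      _ ≤ ((1+s) * v + (-s) * u) * u ^ s := this
  nlinarith [h3]

private lemma T2a {u v s : ℝ} (hv : 0 < v) (hvu : v ≤ u) (hs : 0 ≤ s) :
    (u ^ s - v ^ s) * v ^ (s+1) ≤ s * (u ^ s * u ^ s * (u - v)) := by
  have hu : 0 < u := lt_of_lt_of_le hv hvu
  set r := v / u with hr_def
  have hr0 : 0 < r := div_pos hv hu
  have hr1 : r ≤ 1 := (div_le_one hu).2 hvu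
  have hv_eq : v = r * u := by rw [hr_def]; field_simp
  have e1 : v ^ s = r ^ s * u ^ s := by rw [hv_eq, Real.mul_rpow hr0.le hu.le]
  have e2 : v ^ (s+1) = r ^ (s+1) * u ^ (s+1) := by rw [hv_eq, Real.mul_rpow hr0.le hu.le]
  have e3 : u ^ (s+1) = u ^ s * u := by rw [Real.rpow_add hu, Real.rpow_one]
  have H := mul_le_mul_of_nonneg_left (Ra hr0 hr1 hs)
    (show (0:ℝ) ≤ u ^ s * u ^ s * u by positivity)
  have g1 : (u ^ s - v ^ s) * v ^ (s+1) = u ^ s * u ^ s * u * ((1 - r ^ s) * r ^ (s+1)) := by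
    rw [e1, e2, e3]; ring
  have g2 : s * (u ^ s * u ^ s * (u - v)) = u ^ s * u ^ s * u * (s * (1 - r)) := by
    rw [hv_eq]; ring
  rw [g1, g2]; exact H

private lemma T2b {u v s : ℝ} (hv : 0 < v) (hvu : v ≤ u) (hs0 : -(1/2) < s) (hs1 : s < 0) :
    (v ^ s - u ^ s) * v ^ (s+1) ≤ u ^ s * u ^ s * (u - v) := by
  have hu : 0 < u := lt_of_lt_of_le hv hvu
  set r := v / u with hr_def
  have hr0 : 0 < r := div_pos hv hu
  have hr1 : r ≤ 1 := (div_le_one hu).2 hvu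
  have hv_eq : v = r * u := by rw [hr_def]; field_simp
  have e1 : v ^ s = r ^ s * u ^ s := by rw [hv_eq, Real.mul_rpow hr0.le hu.le]
  have e2 : v ^ (s+1) = r ^ (s+1) * u ^ (s+1) := by rw [hv_eq, Real.mul_rpow hr0.le hu.le]
  have e3 : u ^ (s+1) = u ^ s * u := by rw [Real.rpow_add hu, Real.rpow_one]
  have H := mul_le_mul_of_nonneg_left (Rb hr0 hr1 hs0 hs1)
    (show (0:ℝ) ≤ u ^ s * u ^ s * u by positivity)
  have g1 : (v ^ s - u ^ s) * v ^ (s+1) = u ^ s * u ^ s * u * ((r ^ s - 1) * r ^ (s+1)) := by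
    rw [e1, e2, e3]; ring
  have g2 : u ^ s * u ^ s * (u - v) = u ^ s * u ^ s * u * (1 - r) := by
    rw [hv_eq]; ring
  rw [g1, g2]; exact H

private lemma two_rpow_ge_one {s : ℝ} : (1:ℝ) ≤ (2:ℝ) ^ |s| := by
  calc (1:ℝ) = (2:ℝ) ^ (0:ℝ) := by simp
  _ ≤ (2:ℝ) ^ |s| := Real.rpow_le_rpow_of_exponent_le one_le_two (abs_nonneg s)

private lemma key_scalar {κ a b s SD VD : ℝ} (hκ : 0 ≤ κ) (hb : 0 ≤ b) (hba : b ≤ a)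
    (hv : 0 < κ + b) (hs : -(1/2) < s)
    (hVD : 0 ≤ VD) (hVDge : (κ+a)^s * a - (κ+b)^s * b ≤ VD)
    (hSD : SD ≤ (κ+a)^s * VD + |(κ+a)^s - (κ+b)^s| * ((κ+b)^s * b)) :
    SD ≤ (2:ℝ)^|s| * (3+|s|) * ((κ + a + b)^s * VD) := by
  have hu : 0 < κ + a := lt_of_lt_of_le hv (by linarith)
  have hvu : κ + b ≤ κ + a := by linarith
  have hB : 0 < κ + a + b := by linarith
  have husnn : 0 ≤ (κ+a)^s := Real.rpow_nonneg hu.le s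
  have hvsnn : 0 ≤ (κ+b)^s := Real.rpow_nonneg hv.le s
  have hBsnn : 0 ≤ (κ+a+b)^s := Real.rpow_nonneg hB.le s
  have h2pow := two_rpow_ge_one (s := s)
  have hvb : (κ+b)^s * b ≤ (κ+b)^(s+1) := by
    have e : (κ+b)^(s+1) = (κ+b)^s * (κ+b) := by rw [Real.rpow_add hv, Real.rpow_one]
    nlinarith
  rcases le_or_gt 0 s with hs0 | hs0
  · -- case 0 ≤ s
    have habs : |s| = s := abs_of_nonneg hs0
    have husvs : (κ+b)^s ≤ (κ+a)^s := Real.rpow_le_rpow hv.le hvu hs0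
    have hD : (κ+a)^s * (a - b) ≤ VD := by
      nlinarith [mul_nonneg (sub_nonneg.2 husvs) hb]
    have hT2 := T2a hv hvu hs0
    have habs2 : |(κ+a)^s - (κ+b)^s| = (κ+a)^s - (κ+b)^s := abs_of_nonneg (by linarith)
    rw [habs2] at hSD
    have hcross : ((κ+a)^s - (κ+b)^s) * ((κ+b)^s * b)
        ≤ ((κ+a)^s - (κ+b)^s) * (κ+b)^(s+1) :=
      mul_le_mul_of_nonneg_left hvb (by linarith)
    have hDs : s * ((κ+a)^s * ((κ+a)^s * (a - b))) ≤ s * ((κ+a)^s * VD) :=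
      mul_le_mul_of_nonneg_left (mul_le_mul_of_nonneg_left hD husnn) hs0
    have step : SD ≤ (1+s) * ((κ+a)^s * VD) := by nlinarith
    have hBs : (κ+a)^s ≤ (κ+a+b)^s := Real.rpow_le_rpow hu.le (by linarith) hs0
    have hmono : (κ+a)^s * VD ≤ (κ+a+b)^s * VD := mul_le_mul_of_nonneg_right hBs hVD
    rw [habs]
    have h2s : (1:ℝ) ≤ (2:ℝ)^s := by rw [← habs]; exact h2pow
    have hcoef : (1:ℝ) + s ≤ (2:ℝ)^s * (3+s) := by nlinarith
    calc SD ≤ (1+s) * ((κ+a)^s * VD) := step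
      _ ≤ (1+s) * ((κ+a+b)^s * VD) := mul_le_mul_of_nonneg_left hmono (by linarith)
      _ ≤ (2:ℝ)^s * (3+s) * ((κ+a+b)^s * VD) :=
          mul_le_mul_of_nonneg_right hcoef (mul_nonneg hBsnn hVD)
  · -- case s < 0
    have habs : |s| = -s := abs_of_neg hs0
    have husvs : (κ+a)^s ≤ (κ+b)^s := Real.rpow_le_rpow_of_nonpos hv hvu hs0.le
    have hL1 := L1 hv hvu (by linarith) hs0
    have hD : (1+s) * ((κ+a)^s * (a - b)) ≤ VD := by
      have h1 : ((κ+b)^s - (κ+a)^s) * b ≤ ((κ+b)^s - (κ+a)^s) * (κ+b) :=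
        mul_le_mul_of_nonneg_left (by linarith) (by linarith)
      nlinarith
    have hT2 := T2b hv hvu hs hs0
    have habs2 : |(κ+a)^s - (κ+b)^s| = (κ+b)^s - (κ+a)^s := by
      rw [abs_sub_comm]; exact abs_of_nonneg (by linarith)
    rw [habs2] at hSD
    have hcross : ((κ+b)^s - (κ+a)^s) * ((κ+b)^s * b)
        ≤ ((κ+b)^s - (κ+a)^s) * (κ+b)^(s+1) :=
      mul_le_mul_of_nonneg_left hvb (by linarith)
    have hDs : (1+s) * ((κ+a)^s * ((κ+a)^s * (a - b))) ≤ (κ+a)^s * VD := by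
      have h := mul_le_mul_of_nonneg_left hD husnn
      calc (1+s) * ((κ+a)^s * ((κ+a)^s * (a - b)))
          = (κ+a)^s * ((1+s) * ((κ+a)^s * (a - b))) := by ring
        _ ≤ (κ+a)^s * VD := h
    have hTnn : 0 ≤ (κ+a)^s * ((κ+a)^s * (a - b)) :=
      mul_nonneg husnn (mul_nonneg husnn (by linarith))
    have hprod : 0 ≤ (2*s+1) * ((κ+a)^s * ((κ+a)^s * (a-b))) :=
      mul_nonneg (by linarith) hTnn
    have step : SD ≤ 3 * ((κ+a)^s * VD) := by
      linarith [hSD, hcross, hT2, hDs, hprod]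
    -- (κ+a)^s ≤ 2^(-s) * (κ+a+b)^s
    have h2u : κ + a + b ≤ 2*(κ+a) := by linarith
    have hr : (2*(κ+a))^s ≤ (κ+a+b)^s := Real.rpow_le_rpow_of_nonpos hB h2u hs0.le
    have hmul : (2*(κ+a))^s = 2^s * (κ+a)^s := Real.mul_rpow (by norm_num) hu.le
    have h2s2 : (2:ℝ)^s * (2:ℝ)^(-s) = 1 := by
      rw [← Real.rpow_add (by norm_num : (0:ℝ) < 2)]; norm_num
    have h2snn : 0 ≤ (2:ℝ)^(-s) := Real.rpow_nonneg (by norm_num) _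
    have hfin : (κ+a)^s ≤ (2:ℝ)^(-s) * (κ+a+b)^s := by
      have h := mul_le_mul_of_nonneg_left hr h2snn
      rw [hmul] at h
      calc (κ+a)^s = ((2:ℝ)^s * (2:ℝ)^(-s)) * (κ+a)^s := by rw [h2s2]; ring
        _ = (2:ℝ)^(-s) * ((2:ℝ)^s * (κ+a)^s) := by ring
        _ ≤ (2:ℝ)^(-s) * (κ+a+b)^s := h
    rw [habs]
    have hVDmul : (κ+a)^s * VD ≤ (2:ℝ)^(-s) * ((κ+a+b)^s * VD) := by
      have := mul_le_mul_of_nonneg_right hfin hVD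
      linarith [this, (by ring : (2:ℝ)^(-s) * (κ+a+b)^s * VD = (2:ℝ)^(-s) * ((κ+a+b)^s * VD))]
    have hchain : 3 * ((κ+a)^s * VD) ≤ 3 * ((2:ℝ)^(-s) * ((κ+a+b)^s * VD)) :=
      mul_le_mul_of_nonneg_left hVDmul (by norm_num)
    have hcoef2 : 3 * ((2:ℝ)^(-s) * ((κ+a+b)^s * VD)) ≤ 2^(-s) * (3 + -s) * ((κ+a+b)^s * VD) := by
      have hx : 0 ≤ (-s) * ((2:ℝ)^(-s) * ((κ+a+b)^s * VD)) :=
        mul_nonneg (by linarith) (mul_nonneg h2snn (mul_nonneg hBsnn hVD))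
      linarith [hx]
    linarith

private lemma Vop_norm (n N : ℕ) (p κ : ℝ) (hκ : 0 ≤ κ) (ξ : EuclideanSpace ℝ (Fin n × Fin N)) :
    ‖Vop n N p κ ξ‖ = (κ + ‖ξ‖) ^ ((p - 2) / 2) * ‖ξ‖ := by
  unfold Vop
  rw [norm_smul, Real.norm_eq_abs, abs_of_nonneg (Real.rpow_nonneg (by positivity) _)]

private lemma Sop_norm (n N : ℕ) (p κ : ℝ) (hκ : 0 ≤ κ) (ξ : EuclideanSpace ℝ (Fin n × Fin N)) :
    ‖Sop n N p κ ξ‖ = (κ + ‖ξ‖) ^ (p - 2) * ‖ξ‖ := by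
  unfold Sop
  rw [norm_smul, Real.norm_eq_abs, abs_of_nonneg (Real.rpow_nonneg (by positivity) _)]

private lemma Sop_eq_smul_Vop (n N : ℕ) (p κ : ℝ) (ξ : EuclideanSpace ℝ (Fin n × Fin N))
    (h : 0 < κ + ‖ξ‖) :
    Sop n N p κ ξ = ((κ + ‖ξ‖) ^ ((p - 2) / 2)) • Vop n N p κ ξ := by
  unfold Sop Vop
  rw [smul_smul, ← Real.rpow_add h]
  norm_num

private lemma key_sym (n N : ℕ) (p : ℝ) (hp : 1 < p) (κ : ℝ) (hκ : 0 ≤ κ)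
    (ξ₁ ξ₂ : EuclideanSpace ℝ (Fin n × Fin N)) (hba : ‖ξ₂‖ ≤ ‖ξ₁‖) :
    ‖Sop n N p κ ξ₁ - Sop n N p κ ξ₂‖
      ≤ (2:ℝ) ^ |(p-2)/2| * (3 + |(p-2)/2|)
          * ((κ + ‖ξ₁‖ + ‖ξ₂‖) ^ ((p-2)/2) * ‖Vop n N p κ ξ₁ - Vop n N p κ ξ₂‖) := by
  have hs : -(1/2) < (p-2)/2 := by linarith
  have hC1 : (1:ℝ) ≤ (2:ℝ)^|(p-2)/2| * (3+|(p-2)/2|) := by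
    nlinarith [two_rpow_ge_one (s := (p-2)/2), abs_nonneg ((p-2)/2)]
  rcases eq_or_lt_of_le (show (0:ℝ) ≤ κ + ‖ξ₁‖ by positivity) with hu | hu
  · -- κ + ‖ξ₁‖ = 0 : everything vanishes
    have h1 : ξ₁ = 0 := norm_eq_zero.mp (by linarith [norm_nonneg ξ₁])
    have h2 : ξ₂ = 0 := by
      rw [h1] at hba
      exact norm_eq_zero.mp (le_antisymm (by simpa using hba) (norm_nonneg _))
    subst h1; subst h2
    simp [Sop, Vop]
  · rcases eq_or_lt_of_le (show (0:ℝ) ≤ κ + ‖ξ₂‖ by positivity) with hv | hv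
    · -- κ + ‖ξ₂‖ = 0 : κ = 0, ξ₂ = 0
      have hκ0 : κ = 0 := le_antisymm (by linarith [norm_nonneg ξ₂]) hκ
      have h2 : ξ₂ = 0 := norm_eq_zero.mp (by linarith)
      subst hκ0; subst h2
      rw [show Sop n N p 0 (0 : EuclideanSpace ℝ (Fin n × Fin N)) = 0 by simp [Sop],
        show Vop n N p 0 (0 : EuclideanSpace ℝ (Fin n × Fin N)) = 0 by simp [Vop],
        sub_zero, sub_zero, Sop_norm n N p 0 le_rfl ξ₁, Vop_norm n N p 0 le_rfl ξ₁,
        norm_zero, add_zero]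
      have e2 : ((0:ℝ)+‖ξ₁‖)^((p-2)/2) * (((0:ℝ)+‖ξ₁‖)^((p-2)/2) * ‖ξ₁‖)
          = ((0:ℝ)+‖ξ₁‖)^(p-2) * ‖ξ₁‖ := by
        rw [← mul_assoc, ← Real.rpow_add hu]
        norm_num
      rw [e2]
      nlinarith [hC1, mul_nonneg (Real.rpow_nonneg (le_of_lt hu) (p-2)) (norm_nonneg ξ₁)]
    · -- main case
      have hvu : κ + ‖ξ₂‖ ≤ κ + ‖ξ₁‖ := by linarith
      have hdecomp : Sop n N p κ ξ₁ - Sop n N p κ ξ₂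
          = ((κ+‖ξ₁‖)^((p-2)/2)) • (Vop n N p κ ξ₁ - Vop n N p κ ξ₂)
            + (((κ+‖ξ₁‖)^((p-2)/2)) - ((κ+‖ξ₂‖)^((p-2)/2))) • Vop n N p κ ξ₂ := by
        rw [Sop_eq_smul_Vop n N p κ ξ₁ hu, Sop_eq_smul_Vop n N p κ ξ₂ hv]
        module
      have hSD : ‖Sop n N p κ ξ₁ - Sop n N p κ ξ₂‖
          ≤ (κ+‖ξ₁‖)^((p-2)/2) * ‖Vop n N p κ ξ₁ - Vop n N p κ ξ₂‖
            + |(κ+‖ξ₁‖)^((p-2)/2) - (κ+‖ξ₂‖)^((p-2)/2)| * ((κ+‖ξ₂‖)^((p-2)/2) * ‖ξ₂‖) := by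
        rw [hdecomp]
        refine (norm_add_le _ _).trans ?_
        rw [norm_smul, norm_smul, Real.norm_eq_abs, Real.norm_eq_abs,
          abs_of_nonneg (Real.rpow_nonneg (by positivity : (0:ℝ) ≤ κ + ‖ξ₁‖) _),
          Vop_norm n N p κ hκ ξ₂]
      have hVDge : (κ+‖ξ₁‖)^((p-2)/2) * ‖ξ₁‖ - (κ+‖ξ₂‖)^((p-2)/2) * ‖ξ₂‖
          ≤ ‖Vop n N p κ ξ₁ - Vop n N p κ ξ₂‖ := by
        have h := norm_sub_norm_le (Vop n N p κ ξ₁) (Vop n N p κ ξ₂)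
        rw [Vop_norm n N p κ hκ ξ₁, Vop_norm n N p κ hκ ξ₂] at h
        exact h
      exact key_scalar hκ (norm_nonneg ξ₂) hba hv hs (norm_nonneg _) hVDge hSD

private lemma key_vec (n N : ℕ) (p : ℝ) (hp : 1 < p) (κ : ℝ) (hκ : 0 ≤ κ)
    (ξ₁ ξ₂ : EuclideanSpace ℝ (Fin n × Fin N)) :
    ‖Sop n N p κ ξ₁ - Sop n N p κ ξ₂‖
      ≤ (2:ℝ)^|(p-2)/2| * ((2:ℝ)^|(p-2)/2| * (3 + |(p-2)/2|))
          * ((κ + ‖ξ₁‖ + ‖ξ₁ - ξ₂‖) ^ ((p-2)/2) * ‖Vop n N p κ ξ₁ - Vop n N p κ ξ₂‖) := by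
  have hC0nn : (0:ℝ) ≤ (2:ℝ)^|(p-2)/2| * (3 + |(p-2)/2|) := by
    have := abs_nonneg ((p-2)/2)
    have := Real.rpow_nonneg (by norm_num : (0:ℝ) ≤ 2) |(p-2)/2|
    nlinarith
  by_cases hB0 : κ + ‖ξ₁‖ + ‖ξ₂‖ = 0
  · have h1 : ξ₁ = 0 := norm_eq_zero.mp (by
      have := norm_nonneg ξ₁; have := norm_nonneg ξ₂; linarith)
    have h2 : ξ₂ = 0 := norm_eq_zero.mp (by
      have := norm_nonneg ξ₁; have := norm_nonneg ξ₂; linarith)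
    subst h1; subst h2
    simp [Sop, Vop]
  · have hBpos : 0 < κ + ‖ξ₁‖ + ‖ξ₂‖ :=
      lt_of_le_of_ne (by positivity) (Ne.symm hB0)
    have hAB : κ + ‖ξ₁‖ + ‖ξ₁ - ξ₂‖ ≤ 2*(κ + ‖ξ₁‖ + ‖ξ₂‖) := by
      have := norm_sub_le ξ₁ ξ₂
      have := norm_nonneg ξ₁
      have := norm_nonneg ξ₂
      linarith
    have hBA : κ + ‖ξ₁‖ + ‖ξ₂‖ ≤ 2*(κ + ‖ξ₁‖ + ‖ξ₁ - ξ₂‖) := by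
      have h := norm_sub_le ξ₁ (ξ₁ - ξ₂)
      have he : ξ₁ - (ξ₁ - ξ₂) = ξ₂ := by abel
      rw [he] at h
      have := norm_nonneg (ξ₁ - ξ₂)
      linarith
    have hApos : 0 < κ + ‖ξ₁‖ + ‖ξ₁ - ξ₂‖ := by linarith
    have hBs_le : (κ+‖ξ₁‖+‖ξ₂‖)^((p-2)/2)
        ≤ (2:ℝ)^|(p-2)/2| * (κ+‖ξ₁‖+‖ξ₁-ξ₂‖)^((p-2)/2) := by
      rcases le_or_gt 0 ((p-2)/2) with hs0 | hs0
      · rw [abs_of_nonneg hs0]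
        calc (κ+‖ξ₁‖+‖ξ₂‖)^((p-2)/2) ≤ (2*(κ+‖ξ₁‖+‖ξ₁-ξ₂‖))^((p-2)/2) :=
              Real.rpow_le_rpow (by positivity) (by linarith) hs0
          _ = (2:ℝ)^((p-2)/2) * (κ+‖ξ₁‖+‖ξ₁-ξ₂‖)^((p-2)/2) :=
              Real.mul_rpow (by norm_num) (by positivity)
      · rw [abs_of_neg hs0]
        have hA2 : 0 < (κ+‖ξ₁‖+‖ξ₁-ξ₂‖)/2 := by linarith
        have h1 : (κ+‖ξ₁‖+‖ξ₁-ξ₂‖)/2 ≤ κ+‖ξ₁‖+‖ξ₂‖ := by linarith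
        have h2 := Real.rpow_le_rpow_of_nonpos hA2 h1 hs0.le
        have h3 : ((κ+‖ξ₁‖+‖ξ₁-ξ₂‖)/2)^((p-2)/2)
            = (κ+‖ξ₁‖+‖ξ₁-ξ₂‖)^((p-2)/2) / (2:ℝ)^((p-2)/2) :=
          Real.div_rpow (by positivity) (by norm_num) _
        have h4 : (2:ℝ)^((p-2)/2) * (2:ℝ)^(-((p-2)/2)) = 1 := by
          rw [← Real.rpow_add (by norm_num : (0:ℝ) < 2)]; norm_num
        rw [h3] at h2
        have h6 : (κ+‖ξ₁‖+‖ξ₁-ξ₂‖)^((p-2)/2) / (2:ℝ)^((p-2)/2)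
            = (2:ℝ)^(-((p-2)/2)) * (κ+‖ξ₁‖+‖ξ₁-ξ₂‖)^((p-2)/2) := by
          rw [Real.rpow_neg (by norm_num : (0:ℝ) ≤ 2)]; ring
        rw [h6] at h2
        exact h2
    have hfinish : ∀ W : ℝ, 0 ≤ W →
        (2:ℝ)^|(p-2)/2| * (3 + |(p-2)/2|) * ((κ+‖ξ₁‖+‖ξ₂‖)^((p-2)/2) * W)
        ≤ (2:ℝ)^|(p-2)/2| * ((2:ℝ)^|(p-2)/2| * (3 + |(p-2)/2|))
            * ((κ + ‖ξ₁‖ + ‖ξ₁ - ξ₂‖) ^ ((p-2)/2) * W) := by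
      intro W hW
      have h := mul_le_mul_of_nonneg_right hBs_le hW
      calc (2:ℝ)^|(p-2)/2| * (3 + |(p-2)/2|) * ((κ+‖ξ₁‖+‖ξ₂‖)^((p-2)/2) * W)
          ≤ (2:ℝ)^|(p-2)/2| * (3 + |(p-2)/2|)
              * ((2:ℝ)^|(p-2)/2| * (κ+‖ξ₁‖+‖ξ₁-ξ₂‖)^((p-2)/2) * W) :=
            mul_le_mul_of_nonneg_left h hC0nn
        _ = (2:ℝ)^|(p-2)/2| * ((2:ℝ)^|(p-2)/2| * (3 + |(p-2)/2|))
              * ((κ + ‖ξ₁‖ + ‖ξ₁ - ξ₂‖) ^ ((p-2)/2) * W) := by ring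
    rcases le_total ‖ξ₂‖ ‖ξ₁‖ with h | h
    · exact (key_sym n N p hp κ hκ ξ₁ ξ₂ h).trans
        (hfinish _ (norm_nonneg _))
    · have hk := key_sym n N p hp κ hκ ξ₂ ξ₁ h
      rw [norm_sub_rev (Sop n N p κ ξ₂), norm_sub_rev (Vop n N p κ ξ₂),
        show κ + ‖ξ₂‖ + ‖ξ₁‖ = κ + ‖ξ₁‖ + ‖ξ₂‖ by ring] at hk
      exact hk.trans (hfinish _ (norm_nonneg _))

/-- **One-sided Young-type inequality.**  For each `p ∈ (1,∞)` and `δ > 0` there is a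
constant `c_δ ≥ 1` depending only on `p`, `δ` (and `n, N`) such that for all `κ ≥ 0`
and all matrices `ξ₁, ξ₂, ξ₃`,
`(S(ξ₁) - S(ξ₂)) : ξ₃ ≤ δ |V(ξ₁) - V(ξ₂)|² + c_δ (κ + |ξ₁| + |ξ₁ - ξ₂|)^(p-2) |ξ₃|²`. -/
theorem one_sided_young (n N : ℕ) (hn : 1 ≤ n) (hN : 1 ≤ N) (p : ℝ) (hp : 1 < p)
    (δ : ℝ) (hδ : 0 < δ) :
    ∃ cδ : ℝ, 1 ≤ cδ ∧
      ∀ κ : ℝ, 0 ≤ κ →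
        ∀ ξ₁ ξ₂ ξ₃ : EuclideanSpace ℝ (Fin n × Fin N),
          ⟪Sop n N p κ ξ₁ - Sop n N p κ ξ₂, ξ₃⟫
            ≤ δ * ‖Vop n N p κ ξ₁ - Vop n N p κ ξ₂‖ ^ 2
              + cδ * ((κ + ‖ξ₁‖ + ‖ξ₁ - ξ₂‖) ^ (p - 2) * ‖ξ₃‖ ^ 2) := by
  set C : ℝ := (2:ℝ)^|(p-2)/2| * ((2:ℝ)^|(p-2)/2| * (3 + |(p-2)/2|)) with hC_def
  have hC1 : (1:ℝ) ≤ C := by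
    rw [hC_def]
    have h2 := two_rpow_ge_one (s := (p-2)/2)
    have h3 : (1:ℝ) ≤ (2:ℝ)^|(p-2)/2| * (2:ℝ)^|(p-2)/2| := by nlinarith
    have h4 : (1:ℝ) ≤ 3 + |(p-2)/2| := by linarith [abs_nonneg ((p-2)/2)]
    have h5 := mul_le_mul h3 h4 zero_le_one (le_trans zero_le_one h3)
    nlinarith [h5]
  refine ⟨max 1 (C^2/(4*δ)), le_max_left _ _, ?_⟩
  intro κ hκ ξ₁ ξ₂ ξ₃
  by_cases hA0 : κ + ‖ξ₁‖ + ‖ξ₁ - ξ₂‖ = 0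
  · have hξ1 : ξ₁ = 0 := norm_eq_zero.mp (by
      have := norm_nonneg ξ₁; have := norm_nonneg (ξ₁ - ξ₂); linarith)
    have hξd : ξ₁ - ξ₂ = 0 := norm_eq_zero.mp (by
      have := norm_nonneg ξ₁; have := norm_nonneg (ξ₁ - ξ₂); linarith)
    have hξ2 : ξ₂ = 0 := by
      have := sub_eq_zero.mp hξd; rw [← this, hξ1]
    subst hξ1; subst hξ2
    have hz : Sop n N p κ (0 : EuclideanSpace ℝ (Fin n × Fin N))
        - Sop n N p κ (0 : EuclideanSpace ℝ (Fin n × Fin N)) = 0 := sub_self _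
    rw [hz, inner_zero_left]
    have h1 : 0 ≤ δ * ‖Vop n N p κ (0 : EuclideanSpace ℝ (Fin n × Fin N))
        - Vop n N p κ (0 : EuclideanSpace ℝ (Fin n × Fin N))‖ ^ 2 := by positivity
    have h2 : 0 ≤ max 1 (C^2/(4*δ)) * ((κ + ‖(0 : EuclideanSpace ℝ (Fin n × Fin N))‖
        + ‖(0 : EuclideanSpace ℝ (Fin n × Fin N)) - 0‖) ^ (p - 2) * ‖ξ₃‖ ^ 2) := by
      have hm : (0:ℝ) ≤ max 1 (C^2/(4*δ)) := le_trans zero_le_one (le_max_left _ _)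
      have : (0:ℝ) ≤ (κ + ‖(0 : EuclideanSpace ℝ (Fin n × Fin N))‖
          + ‖(0 : EuclideanSpace ℝ (Fin n × Fin N)) - 0‖) ^ (p - 2) :=
        Real.rpow_nonneg (by positivity) _
      positivity
    linarith
  · have hApos : 0 < κ + ‖ξ₁‖ + ‖ξ₁ - ξ₂‖ :=
      lt_of_le_of_ne (by positivity) (Ne.symm hA0)
    have hkey := key_vec n N p hp κ hκ ξ₁ ξ₂
    rw [← hC_def] at hkey
    have hCS := real_inner_le_norm (Sop n N p κ ξ₁ - Sop n N p κ ξ₂) ξ₃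
    have h3 : ‖Sop n N p κ ξ₁ - Sop n N p κ ξ₂‖ * ‖ξ₃‖
        ≤ C * ((κ + ‖ξ₁‖ + ‖ξ₁ - ξ₂‖) ^ ((p-2)/2)
            * ‖Vop n N p κ ξ₁ - Vop n N p κ ξ₂‖) * ‖ξ₃‖ :=
      mul_le_mul_of_nonneg_right hkey (norm_nonneg _)
    have hAs2 : (κ + ‖ξ₁‖ + ‖ξ₁ - ξ₂‖) ^ ((p-2)/2) * (κ + ‖ξ₁‖ + ‖ξ₁ - ξ₂‖) ^ ((p-2)/2)
        = (κ + ‖ξ₁‖ + ‖ξ₁ - ξ₂‖) ^ (p-2) := by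
      rw [← Real.rpow_add hApos]
      norm_num
    have hmVal : C^2/(4*δ) ≤ max 1 (C^2/(4*δ)) := le_max_right _ _
    have hm1 : (1:ℝ) ≤ max 1 (C^2/(4*δ)) := le_max_left _ _
    have hCsq : C^2 ≤ 4*δ*(max 1 (C^2/(4*δ))) := by
      rw [div_le_iff₀ (by positivity : (0:ℝ) < 4*δ)] at hmVal
      linarith
    have hyoung : C * ((κ + ‖ξ₁‖ + ‖ξ₁ - ξ₂‖) ^ ((p-2)/2)
          * ‖Vop n N p κ ξ₁ - Vop n N p κ ξ₂‖) * ‖ξ₃‖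
        ≤ δ * ‖Vop n N p κ ξ₁ - Vop n N p κ ξ₂‖ ^ 2
          + max 1 (C^2/(4*δ)) * ((κ + ‖ξ₁‖ + ‖ξ₁ - ξ₂‖) ^ (p - 2) * ‖ξ₃‖ ^ 2) := by
      set X := (κ + ‖ξ₁‖ + ‖ξ₁ - ξ₂‖) ^ ((p-2)/2) with hX_def
      set V := ‖Vop n N p κ ξ₁ - Vop n N p κ ξ₂‖ with hV_def
      set W := ‖ξ₃‖ with hW_def
      set m := max 1 (C^2/(4*δ)) with hm_def
      have hXnn : 0 ≤ X := Real.rpow_nonneg (le_of_lt hApos) _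
      have hrw : (κ + ‖ξ₁‖ + ‖ξ₁ - ξ₂‖) ^ (p - 2) * W ^ 2 = (X*W)^2 := by
        rw [← hAs2]; ring
      rw [hrw]
      nlinarith [sq_nonneg (2*δ*V - C*(X*W)), mul_nonneg (mul_nonneg hXnn (norm_nonneg ξ₃))
          (mul_nonneg hXnn (norm_nonneg ξ₃)), sq_nonneg (X*W), hδ,
        mul_nonneg (le_trans zero_le_one hm1) (sq_nonneg (X*W))]
    calc ⟪Sop n N p κ ξ₁ - Sop n N p κ ξ₂, ξ₃⟫
        ≤ ‖Sop n N p κ ξ₁ - Sop n N p κ ξ₂‖ * ‖ξ₃‖ := hCS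
      _ ≤ C * ((κ + ‖ξ₁‖ + ‖ξ₁ - ξ₂‖) ^ ((p-2)/2)
            * ‖Vop n N p κ ξ₁ - Vop n N p κ ξ₂‖) * ‖ξ₃‖ := h3
      _ ≤ δ * ‖Vop n N p κ ξ₁ - Vop n N p κ ξ₂‖ ^ 2
          + max 1 (C^2/(4*δ)) * ((κ + ‖ξ₁‖ + ‖ξ₁ - ξ₂‖) ^ (p - 2) * ‖ξ₃‖ ^ 2) := hyoung
end

section
/- (Nikolskii approximation quality of time averages) Let X be a Banach space, α ∈ (0,1), r ∈ [1,∞), and let (Ω, F, P) be a probability space. Let u : Ω × [0,T] → X be jointly measurable such that for P-a.e. ω the path u(ω,·) is Bochner r-integrable on [0,T] and the Nikolskii seminorm [u(ω)] := sup_{0 < h ≤ T} h^{−α} (∫_{[0, T−h]} ‖u(ω, s+h) − u(ω, s)‖_X^r ds)^{1/r} is finite, with ω ↦ [u(ω)] square-integrable over Ω. Then there is a constant C depending only on α and r (one may take C = (2^{αr+1}/(αr+1))^{1/r}) such that ( E[ ( Σ_{m=1}^M ∫_{I_m} ‖u(s) − ⟨u⟩_m‖_X^r ds )^{2/r} ]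 )^{1/2} ≤ C τ^α ( E[ [u]² ] )^{1/2}. -/
/-!
Jensen's inequality on each cell `I_m` bounds `∫_{I_m} ‖u - ⟨u⟩_m‖^r` by
`τ⁻¹ ∫∫_{I_m × I_m} ‖u t - u s‖^r`. The squares `I_m × I_m` lie in the strip `|t - s| ≤ τ` of
`[0,T]²`; writing `t = s + h` and integrating first in `s`, each slice is at most `|h|^{αr} [u]^r`
by the definition of the Nikolskii seminorm, and `∫_{-τ}^{τ} |h|^{αr} dh = 2τ^{αr+1}/(αr+1)`. So
`Σ_m ∫_{I_m} ‖u - ⟨u⟩_m‖^r ≤ 2/(αr+1) · τ^{αr} [u]^r` for every path; raising this to the power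
`2/r` and integrating over `Ω` gives the estimate, even with the smaller constant
`(2/(αr+1))^{1/r}`.
-/

open MeasureTheory

/-- The Nikolskii seminorm `[f] = sup_{0 < h ≤ T} h^(-α) (∫_{[0,T-h]} ‖f(s+h) - f(s)‖^r ds)^(1/r)`
of a path `f : ℝ → X` (as a supremum in `ℝ`). -/
noncomputable def nikSeminorm (X : Type*) [NormedAddCommGroup X] (T α r : ℝ) (f : ℝ → X) : ℝ :=
  sSup {x : ℝ | ∃ h ∈ Set.Ioc (0 : ℝ) T,
    x = h ^ (-α) * (∫ s in Set.Icc (0 : ℝ) (T - h), ‖f (s + h) - f s‖ ^ r) ^ (1 / r)}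

open Set
open scoped ENNReal

noncomputable def nikQuotients (X : Type*) [NormedAddCommGroup X] (T α r : ℝ) (f : ℝ → X) :
    Set ℝ :=
  {x : ℝ | ∃ h ∈ Ioc (0 : ℝ) T,
    x = h ^ (-α) * (∫ s in Icc (0 : ℝ) (T - h), ‖f (s + h) - f s‖ ^ r) ^ (1 / r)}

section Jensen

variable {α E : Type*} [MeasurableSpace α] [NormedAddCommGroup E] [NormedSpace ℝ E]
  [CompleteSpace E] {μ : Measure α} {f : α → E}

theorem enorm_sub_integral_le_lintegral [IsProbabilityMeasure μ] (hf : AEStronglyMeasurable f μ)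
    (v : E) : ‖v - ∫ x, f x ∂μ‖ₑ ≤ ∫⁻ x, ‖f x - v‖ₑ ∂μ := by
  by_cases hfi : Integrable f μ
  · calc ‖v - ∫ x, f x ∂μ‖ₑ = ‖∫ x, (v - f x) ∂μ‖ₑ := by
          rw [integral_sub (integrable_const v) hfi, integral_const, probReal_univ, one_smul]
      _ ≤ ∫⁻ x, ‖v - f x‖ₑ ∂μ := enorm_integral_le_lintegral_enorm _
      _ = ∫⁻ x, ‖f x - v‖ₑ ∂μ := by simp_rw [enorm_sub_rev]
  · -- now `∫ f = 0`, but the right-hand side is `∞`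
    have hv : ¬Integrable (fun x => f x - v) μ := fun h =>
      hfi ((h.add (integrable_const v)).congr (ae_of_all _ fun x => sub_add_cancel (f x) v))
    have : ¬HasFiniteIntegral (fun x => f x - v) μ := fun h =>
      hv ⟨hf.sub aestronglyMeasurable_const, h⟩
    rw [HasFiniteIntegral, not_lt, top_le_iff] at this
    simp [this]

theorem enorm_sub_integral_rpow_le [IsProbabilityMeasure μ] (hf : AEStronglyMeasurable f μ)
    {r : ℝ} (hr : 1 ≤ r) (v : E) : ‖v - ∫ x, f x ∂μ‖ₑ ^ r ≤ ∫⁻ x, ‖f x - v‖ₑ ^ r ∂μ := by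
  have hr0 : 0 < r := by linarith
  rw [← ENNReal.le_rpow_inv_iff hr0]
  calc ‖v - ∫ x, f x ∂μ‖ₑ ≤ eLpNorm (fun x => f x - v) 1 μ := by
        rw [eLpNorm_one_eq_lintegral_enorm]; exact enorm_sub_integral_le_lintegral hf v
    _ ≤ eLpNorm (fun x => f x - v) (ENNReal.ofReal r) μ :=
        eLpNorm_le_eLpNorm_of_exponent_le (by simpa using hr) (hf.sub aestronglyMeasurable_const)
    _ = (∫⁻ x, ‖f x - v‖ₑ ^ r ∂μ) ^ r⁻¹ := by
        rw [eLpNorm_eq_lintegral_rpow_enorm_toReal (by simpa using hr0) ENNReal.ofReal_ne_top,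
          ENNReal.toReal_ofReal hr0.le, one_div]

theorem enorm_sub_average_rpow_le [IsFiniteMeasure μ] [NeZero μ] (hf : AEStronglyMeasurable f μ)
    {r : ℝ} (hr : 1 ≤ r) (v : E) : ‖v - ⨍ x, f x ∂μ‖ₑ ^ r ≤ ⨍⁻ x, ‖f x - v‖ₑ ^ r ∂μ :=
  enorm_sub_integral_rpow_le (hf.smul_measure _) hr v

theorem setLIntegral_enorm_sub_setAverage_rpow_le {s : Set α} (hs₀ : μ s ≠ 0) (hs : μ s ≠ ∞)
    (hf : AEStronglyMeasurable f (μ.restrict s)) {r : ℝ} (hr : 1 ≤ r) :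
    ∫⁻ x in s, ‖f x - ⨍ y in s, f y ∂μ‖ₑ ^ r ∂μ
      ≤ (μ s)⁻¹ * ∫⁻ x in s, ∫⁻ y in s, ‖f y - f x‖ₑ ^ r ∂μ ∂μ := by
  have : IsFiniteMeasure (μ.restrict s) := isFiniteMeasure_restrict.2 hs
  have : NeZero (μ.restrict s) := ⟨by simpa using hs₀⟩
  rw [← lintegral_const_mul' _ _ (ENNReal.inv_ne_top.2 hs₀)]
  refine lintegral_mono fun x => (enorm_sub_average_rpow_le hf hr (f x)).trans_eq ?_
  rw [setLAverage_eq, ENNReal.div_eq_inv_mul]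

end Jensen

theorem lintegral_comp_add_neg_of_symm {G : Type*} [MeasurableSpace G] [AddCommGroup G]
    [MeasurableAdd G] (μ : Measure G) [μ.IsAddRightInvariant] {Φ : G → G → ℝ≥0∞}
    (hΦ : ∀ s t, Φ s t = Φ t s) (h : G) :
    ∫⁻ s, Φ s (s + -h) ∂μ = ∫⁻ s, Φ s (s + h) ∂μ := by
  rw [← lintegral_add_right_eq_self _ h]
  simp [hΦ (_ + h)]

theorem setLIntegral_Icc_le_setLIntegral_shift {g : ℝ → ℝ≥0∞} {a b s τ : ℝ}
    (hs : s ∈ Icc a b) (hab : b - a ≤ τ) :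
    ∫⁻ t in Icc a b, g t ≤ ∫⁻ h in Icc (-τ) τ, g (s + h) := by
  have hshift : MeasurePreserving (s + ·) (volume.restrict (Icc (-τ) τ))
      (volume.restrict (Icc (s - τ) (s + τ))) := by
    simpa [sub_eq_add_neg] using (measurePreserving_add_left volume s).restrict_preimage
      (measurableSet_Icc (a := s - τ) (b := s + τ))
  rw [hshift.lintegral_comp_emb (measurableEmbedding_addLeft s)]
  exact lintegral_mono_set (Icc_subset_Icc (by linarith [hs.2]) (by linarith [hs.1]))

noncomputable def timeInterval (τ : ℝ) (m : ℕ) : Set ℝ :=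
  Icc (((m : ℝ) - 1) * τ) (m * τ)

theorem volume_timeInterval (τ : ℝ) (m : ℕ) : volume (timeInterval τ m) = ENNReal.ofReal τ := by
  rw [timeInterval, Real.volume_Icc]
  ring_nf

theorem volume_real_timeInterval {τ : ℝ} (hτ : 0 ≤ τ) (m : ℕ) :
    volume.real (timeInterval τ m) = τ := by
  rw [measureReal_def, volume_timeInterval, ENNReal.toReal_ofReal hτ]

theorem timeInterval_subset_Icc {τ T : ℝ} {m M : ℕ} (hτ : 0 ≤ τ) (hm : m ∈ Finset.Icc 1 M)
    (hMτ : M * τ ≤ T) : timeInterval τ m ⊆ Icc 0 T := by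
  have hm1 : (1 : ℝ) ≤ m := by exact_mod_cast (Finset.mem_Icc.1 hm).1
  have hmM : (m : ℝ) ≤ M := by exact_mod_cast (Finset.mem_Icc.1 hm).2
  exact Icc_subset_Icc (by nlinarith) (by nlinarith)

theorem sum_setLIntegral_timeInterval_le_lintegral (g : ℝ → ℝ≥0∞) {τ : ℝ} (hτ : 0 ≤ τ) (M : ℕ) :
    ∑ m ∈ Finset.Icc 1 M, ∫⁻ s in timeInterval τ m, g s ≤ ∫⁻ s, g s := by
  have hmono : Monotone fun m : ℕ => ((m : ℝ) - 1) * τ := fun i j hij => by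
    dsimp only
    gcongr
  have hdisj : Pairwise (Function.onFun Disjoint fun m : ℕ => Ico (((m : ℝ) - 1) * τ) (m * τ)) := by
    convert hmono.pairwise_disjoint_on_Ico_succ using 4 with m
    simp
  -- the closed cells overlap in endpoints only, so they may be replaced by the disjoint `Ico`s
  simp_rw [timeInterval, ← restrict_Ico_eq_restrict_Icc]
  rw [← lintegral_biUnion_finset (hdisj.set_pairwise _) fun _ _ => measurableSet_Ico]
  exact setLIntegral_le_lintegral _ _

theorem sum_lintegral_timeInterval_prod_le_lintegral_shift {Φ : ℝ → ℝ → ℝ≥0∞}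
    (hΦ : Measurable (Function.uncurry Φ)) {τ : ℝ} (hτ : 0 ≤ τ) (M : ℕ) :
    ∑ m ∈ Finset.Icc 1 M, ∫⁻ s in timeInterval τ m, ∫⁻ t in timeInterval τ m, Φ s t
      ≤ ∫⁻ h in Icc (-τ) τ, ∫⁻ s, Φ s (s + h) := by
  have hmeas : Measurable fun p : ℝ × ℝ => Φ p.1 (p.1 + p.2) :=
    hΦ.comp (measurable_fst.prodMk (measurable_fst.add measurable_snd))
  calc ∑ m ∈ Finset.Icc 1 M, ∫⁻ s in timeInterval τ m, ∫⁻ t in timeInterval τ m, Φ s t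
      ≤ ∑ m ∈ Finset.Icc 1 M, ∫⁻ s in timeInterval τ m, ∫⁻ h in Icc (-τ) τ, Φ s (s + h) := by
        refine Finset.sum_le_sum fun m _ => setLIntegral_mono' measurableSet_Icc fun s hs => ?_
        exact setLIntegral_Icc_le_setLIntegral_shift hs (by linarith)
    _ ≤ ∫⁻ s, ∫⁻ h in Icc (-τ) τ, Φ s (s + h) := sum_setLIntegral_timeInterval_le_lintegral _ hτ M
    _ = ∫⁻ h in Icc (-τ) τ, ∫⁻ s, Φ s (s + h) := lintegral_lintegral_swap hmeas.aemeasurable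

theorem integral_abs_rpow_symm {τ p : ℝ} (hτ : 0 ≤ τ) (hp : 0 ≤ p) :
    ∫ h in (-τ)..τ, |h| ^ p = 2 * τ ^ (p + 1) / (p + 1) := by
  have hcont : Continuous fun h : ℝ => |h| ^ p := continuous_abs.rpow_const fun _ => Or.inr hp
  have hhalf : ∫ h in (0 : ℝ)..τ, |h| ^ p = τ ^ (p + 1) / (p + 1) := by
    rw [intervalIntegral.integral_congr (g := fun h => h ^ p) fun h hh => by
        rw [uIcc_of_le hτ] at hh; simp [abs_of_nonneg hh.1],
      integral_rpow (Or.inl (by linarith)), Real.zero_rpow (by linarith), sub_zero]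
  have hneg : ∫ h in (-τ)..0, |h| ^ p = ∫ h in (0 : ℝ)..τ, |h| ^ p := by
    simpa using (intervalIntegral.integral_comp_neg (a := 0) (b := τ) fun h => |h| ^ p).symm
  rw [← intervalIntegral.integral_add_adjacent_intervals (b := 0) (hcont.intervalIntegrable _ _)
    (hcont.intervalIntegrable _ _), hneg, hhalf]
  ring

theorem lintegral_Icc_abs_rpow {τ p : ℝ} (hτ : 0 ≤ τ) (hp : 0 ≤ p) :
    ∫⁻ h in Icc (-τ) τ, ENNReal.ofReal (|h| ^ p) = ENNReal.ofReal (2 * τ ^ (p + 1) / (p + 1)) := by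
  have hcont : Continuous fun h : ℝ => |h| ^ p := continuous_abs.rpow_const fun _ => Or.inr hp
  rw [← integral_abs_rpow_symm hτ hp, intervalIntegral.integral_of_le (by linarith),
    ← integral_Icc_eq_integral_Ioc, ofReal_integral_eq_lintegral_ofReal hcont.integrableOn_Icc
      (ae_of_all _ fun _ => by positivity)]

section Increments

variable {X : Type*} [NormedAddCommGroup X]

theorem ofReal_norm_rpow {r : ℝ} (hr : 0 ≤ r) (x : X) : ENNReal.ofReal (‖x‖ ^ r) = ‖x‖ₑ ^ r := by
  rw [← ENNReal.ofReal_rpow_of_nonneg (norm_nonneg x) hr, ofReal_norm]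

noncomputable def incrementRpowOn (f : ℝ → X) (r : ℝ) (A : Set ℝ) (s t : ℝ) : ℝ≥0∞ :=
  (A ×ˢ A).indicator (fun p => ‖f p.2 - f p.1‖ₑ ^ r) (s, t)

variable {f : ℝ → X} {r T α τ : ℝ}

theorem incrementRpowOn_comm {A : Set ℝ} (s t : ℝ) :
    incrementRpowOn f r A s t = incrementRpowOn f r A t s := by
  unfold incrementRpowOn
  by_cases hst : (s, t) ∈ A ×ˢ A
  · rw [indicator_of_mem hst, indicator_of_mem (mk_mem_prod hst.2 hst.1), enorm_sub_rev]
  · rw [indicator_of_notMem hst, indicator_of_notMem fun hts => hst ⟨hts.2, hts.1⟩]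

theorem incrementRpowOn_of_mem {A : Set ℝ} {s t : ℝ} (hs : s ∈ A) (ht : t ∈ A) :
    incrementRpowOn f r A s t = ‖f t - f s‖ₑ ^ r :=
  indicator_of_mem (mk_mem_prod hs ht) _

theorem incrementRpowOn_self (hr : 0 < r) {A : Set ℝ} (s : ℝ) :
    incrementRpowOn f r A s s = 0 := by
  simp [incrementRpowOn, ENNReal.zero_rpow_of_pos hr]

theorem measurable_incrementRpowOn (hf : StronglyMeasurable f) {A : Set ℝ} (hA : MeasurableSet A) :
    Measurable (Function.uncurry (incrementRpowOn f r A)) :=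
  (((hf.comp_measurable measurable_snd).sub (hf.comp_measurable measurable_fst)).enorm.pow_const
    r).indicator (hA.prod hA)

theorem lintegral_incrementRpowOn_Icc {h : ℝ} (hh : 0 ≤ h) :
    ∫⁻ s, incrementRpowOn f r (Icc 0 T) s (s + h)
      = ∫⁻ s in Icc 0 (T - h), ‖f (s + h) - f s‖ₑ ^ r := by
  rw [← lintegral_indicator measurableSet_Icc]
  congr 1 with s
  by_cases hs : s ∈ Icc 0 (T - h)
  · rw [indicator_of_mem hs, incrementRpowOn_of_mem (A := Icc 0 T) ⟨hs.1, by linarith [hs.2]⟩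
      ⟨by linarith [hs.1], by linarith [hs.2]⟩]
  · rw [indicator_of_notMem hs, incrementRpowOn, indicator_of_notMem]
    exact fun hst => hs ⟨hst.1.1, by linarith [hst.2.2]⟩

theorem nikSeminorm_nonneg : 0 ≤ nikSeminorm X T α r f := by
  refine Real.sSup_nonneg ?_
  rintro _ ⟨h, hh, rfl⟩
  exact mul_nonneg (Real.rpow_nonneg hh.1.le _)
    (Real.rpow_nonneg (integral_nonneg fun _ => Real.rpow_nonneg (norm_nonneg _) _) _)

theorem integral_norm_shift_rpow_le (hbdd : BddAbove (nikQuotients X T α r f)) (hr : 0 < r)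
    {h : ℝ} (hh : h ∈ Ioc 0 T) :
    ∫ s in Icc 0 (T - h), ‖f (s + h) - f s‖ ^ r ≤ h ^ (α * r) * nikSeminorm X T α r f ^ r := by
  have h0 : 0 < h := hh.1
  set I := ∫ s in Icc 0 (T - h), ‖f (s + h) - f s‖ ^ r
  have hI : 0 ≤ I := integral_nonneg fun _ => Real.rpow_nonneg (norm_nonneg _) _
  have hquot : h ^ (-α) * I ^ (1 / r) ≤ nikSeminorm X T α r f := le_csSup hbdd ⟨h, hh, rfl⟩
  have hroot : I ^ (1 / r) ≤ h ^ α * nikSeminorm X T α r f := by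
    rwa [Real.rpow_neg h0.le, inv_mul_le_iff₀ (by positivity)] at hquot
  calc I = (I ^ (1 / r)) ^ r := by rw [← Real.rpow_mul hI, one_div_mul_cancel hr.ne', Real.rpow_one]
    _ ≤ (h ^ α * nikSeminorm X T α r f) ^ r := Real.rpow_le_rpow (by positivity) hroot hr.le
    _ = h ^ (α * r) * nikSeminorm X T α r f ^ r := by
        rw [Real.mul_rpow (by positivity) nikSeminorm_nonneg, Real.rpow_mul h0.le]

theorem lintegral_enorm_shift_rpow_le (hf : MemLp f (ENNReal.ofReal r) (volume.restrict (Icc 0 T)))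
    (hbdd : BddAbove (nikQuotients X T α r f))
    (hr : 0 < r) {h : ℝ} (hh : h ∈ Ioc 0 T) :
    ∫⁻ s in Icc 0 (T - h), ‖f (s + h) - f s‖ₑ ^ r
      ≤ ENNReal.ofReal (h ^ (α * r) * nikSeminorm X T α r f ^ r) := by
  have hshift : MeasurePreserving (· + h) (volume.restrict (Icc 0 (T - h)))
      (volume.restrict (Icc h T)) := by
    simpa using (measurePreserving_add_right volume h).restrict_preimage
      (measurableSet_Icc (a := h) (b := T))
  have hLp {s : Set ℝ} (hs : s ⊆ Icc 0 T) : MemLp f (ENNReal.ofReal r) (volume.restrict s) :=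
    hf.mono_measure (Measure.restrict_mono_set _ hs)
  have hdiff : MemLp (fun s => f (s + h) - f s) (ENNReal.ofReal r)
      (volume.restrict (Icc 0 (T - h))) :=
    ((hLp (Icc_subset_Icc hh.1.le le_rfl)).comp_measurePreserving hshift).sub
      (hLp (Icc_subset_Icc le_rfl (by linarith [hh.1])))
  have hint := hdiff.integrable_norm_rpow (by simpa using hr) ENNReal.ofReal_ne_top
  rw [ENNReal.toReal_ofReal hr.le] at hint
  calc ∫⁻ s in Icc 0 (T - h), ‖f (s + h) - f s‖ₑ ^ r
      = ENNReal.ofReal (∫ s in Icc 0 (T - h), ‖f (s + h) - f s‖ ^ r) := by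
        rw [ofReal_integral_eq_lintegral_ofReal hint (ae_of_all _ fun _ => by positivity)]
        simp_rw [ofReal_norm_rpow hr.le]
    _ ≤ ENNReal.ofReal (h ^ (α * r) * nikSeminorm X T α r f ^ r) :=
        ENNReal.ofReal_le_ofReal (integral_norm_shift_rpow_le hbdd hr hh)

theorem lintegral_incrementRpowOn_le (hf : MemLp f (ENNReal.ofReal r) (volume.restrict (Icc 0 T)))
    (hbdd : BddAbove (nikQuotients X T α r f))
    (hr : 0 < r) {h : ℝ} (hh : |h| ≤ T) :
    ∫⁻ s, incrementRpowOn f r (Icc 0 T) s (s + h)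
      ≤ ENNReal.ofReal (|h| ^ (α * r) * nikSeminorm X T α r f ^ r) := by
  -- the integrand is symmetric, so `s ↦ s + h` turns the shift by `h` into the shift by `-h`
  wlog hpos : 0 ≤ h generalizing h
  · have hneg := this (h := -h) (by rwa [abs_neg]) (by linarith)
    rwa [lintegral_comp_add_neg_of_symm volume (incrementRpowOn_comm), abs_neg] at hneg
  rcases hpos.eq_or_lt with rfl | hpos
  · simp only [add_zero, incrementRpowOn_self hr, lintegral_zero, zero_le]
  rw [lintegral_incrementRpowOn_Icc hpos.le, abs_of_pos hpos]
  exact lintegral_enorm_shift_rpow_le hf hbdd hr ⟨hpos, by rwa [abs_of_pos hpos] at hh⟩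

theorem sum_lintegral_timeInterval_prod_enorm_sub_rpow_le (hf : StronglyMeasurable f)
    (hfLp : MemLp f (ENNReal.ofReal r) (volume.restrict (Icc 0 T)))
    (hbdd : BddAbove (nikQuotients X T α r f)) (hα : 0 ≤ α) (hr : 0 < r) (hτ : 0 ≤ τ)
    (hτT : τ ≤ T) (M : ℕ) (hMτ : M * τ ≤ T) :
    ∑ m ∈ Finset.Icc 1 M, ∫⁻ s in timeInterval τ m, ∫⁻ t in timeInterval τ m, ‖f t - f s‖ₑ ^ r
      ≤ ENNReal.ofReal (2 * τ ^ (α * r + 1) / (α * r + 1) * nikSeminorm X T α r f ^ r) := by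
  set Ψ := incrementRpowOn f r (Icc 0 T)
  set K := nikSeminorm X T α r f
  have hΨ : ∀ m ∈ Finset.Icc 1 M,
      ∫⁻ s in timeInterval τ m, ∫⁻ t in timeInterval τ m, ‖f t - f s‖ₑ ^ r
        = ∫⁻ s in timeInterval τ m, ∫⁻ t in timeInterval τ m, Ψ s t := fun m hm => by
    have hsub := timeInterval_subset_Icc hτ hm hMτ
    refine setLIntegral_congr_fun measurableSet_Icc fun s hs =>
      setLIntegral_congr_fun measurableSet_Icc fun t ht => ?_
    exact (incrementRpowOn_of_mem (hsub hs) (hsub ht)).symm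
  have hshift : ∀ h ∈ Icc (-τ) τ, ∫⁻ s, Ψ s (s + h)
      ≤ ENNReal.ofReal (|h| ^ (α * r)) * ENNReal.ofReal (K ^ r) := fun h hh => by
    rw [← ENNReal.ofReal_mul (by positivity)]
    exact lintegral_incrementRpowOn_le hfLp hbdd hr ((abs_le.2 hh).trans hτT)
  calc ∑ m ∈ Finset.Icc 1 M, ∫⁻ s in timeInterval τ m, ∫⁻ t in timeInterval τ m, ‖f t - f s‖ₑ ^ r
      = ∑ m ∈ Finset.Icc 1 M, ∫⁻ s in timeInterval τ m, ∫⁻ t in timeInterval τ m, Ψ s t :=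
        Finset.sum_congr rfl hΨ
    _ ≤ ∫⁻ h in Icc (-τ) τ, ∫⁻ s, Ψ s (s + h) :=
        sum_lintegral_timeInterval_prod_le_lintegral_shift
          (measurable_incrementRpowOn hf measurableSet_Icc) hτ M
    _ ≤ ∫⁻ h in Icc (-τ) τ, ENNReal.ofReal (|h| ^ (α * r)) * ENNReal.ofReal (K ^ r) :=
        setLIntegral_mono' measurableSet_Icc hshift
    _ = ENNReal.ofReal (2 * τ ^ (α * r + 1) / (α * r + 1) * K ^ r) := by
        have hcont : Continuous fun h : ℝ => |h| ^ (α * r) :=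
          continuous_abs.rpow_const fun _ => Or.inr (by positivity)
        rw [lintegral_mul_const _ hcont.measurable.ennreal_ofReal,
          lintegral_Icc_abs_rpow hτ (by positivity), ← ENNReal.ofReal_mul (by positivity)]

end Increments

section Averages

variable {X : Type*} [NormedAddCommGroup X] [NormedSpace ℝ X] [CompleteSpace X]
  {T α r τ : ℝ} {f : ℝ → X}

theorem sum_setLIntegral_enorm_sub_setAverage_rpow_le (hf : StronglyMeasurable f)
    (hfLp : MemLp f (ENNReal.ofReal r) (volume.restrict (Icc 0 T)))
    (hbdd : BddAbove (nikQuotients X T α r f)) (hα : 0 ≤ α) (hr : 1 ≤ r) (hτ : 0 < τ)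
    (hτT : τ ≤ T) (M : ℕ) (hMτ : M * τ ≤ T) :
    ∑ m ∈ Finset.Icc 1 M, ∫⁻ s in timeInterval τ m, ‖f s - ⨍ t in timeInterval τ m, f t‖ₑ ^ r
      ≤ ENNReal.ofReal (2 / (α * r + 1) * τ ^ (α * r) * nikSeminorm X T α r f ^ r) := by
  calc ∑ m ∈ Finset.Icc 1 M, ∫⁻ s in timeInterval τ m, ‖f s - ⨍ t in timeInterval τ m, f t‖ₑ ^ r
      ≤ ∑ m ∈ Finset.Icc 1 M, (ENNReal.ofReal τ)⁻¹ *
          ∫⁻ s in timeInterval τ m, ∫⁻ t in timeInterval τ m, ‖f t - f s‖ₑ ^ r := by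
        refine Finset.sum_le_sum fun m _ => ?_
        rw [← volume_timeInterval τ m]
        exact setLIntegral_enorm_sub_setAverage_rpow_le
          (by rw [volume_timeInterval]; exact (ENNReal.ofReal_pos.2 hτ).ne')
          (by rw [volume_timeInterval]; exact ENNReal.ofReal_ne_top) hf.aestronglyMeasurable hr
    _ = (ENNReal.ofReal τ)⁻¹ * ∑ m ∈ Finset.Icc 1 M,
          ∫⁻ s in timeInterval τ m, ∫⁻ t in timeInterval τ m, ‖f t - f s‖ₑ ^ r :=
        (Finset.mul_sum _ _ _).symm
    _ ≤ (ENNReal.ofReal τ)⁻¹ *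
          ENNReal.ofReal (2 * τ ^ (α * r + 1) / (α * r + 1) * nikSeminorm X T α r f ^ r) := by
        gcongr
        exact sum_lintegral_timeInterval_prod_enorm_sub_rpow_le hf hfLp hbdd hα (by linarith)
          hτ.le hτT M hMτ
    _ = ENNReal.ofReal (2 / (α * r + 1) * τ ^ (α * r) * nikSeminorm X T α r f ^ r) := by
        have hK : 0 ≤ nikSeminorm X T α r f := nikSeminorm_nonneg
        rw [← ENNReal.ofReal_inv_of_pos hτ, ← ENNReal.ofReal_mul (by positivity),
          Real.rpow_add_one hτ.ne']
        congr 1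
        field_simp

theorem sum_integral_norm_sub_average_rpow_le (hf : StronglyMeasurable f)
    (hfLp : MemLp f (ENNReal.ofReal r) (volume.restrict (Icc 0 T)))
    (hbdd : BddAbove (nikQuotients X T α r f)) (hα : 0 ≤ α) (hr : 1 ≤ r) (hτ : 0 < τ)
    (hτT : τ ≤ T) (M : ℕ) (hMτ : M * τ ≤ T) :
    ∑ m ∈ Finset.Icc 1 M, ∫ s in timeInterval τ m,
        ‖f s - (1 / τ) • ∫ t in timeInterval τ m, f t‖ ^ r
      ≤ 2 / (α * r + 1) * τ ^ (α * r) * nikSeminorm X T α r f ^ r := by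
  have hr0 : 0 ≤ r := zero_le_one.trans hr
  have hK : 0 ≤ nikSeminorm X T α r f := nikSeminorm_nonneg
  have hsum := sum_setLIntegral_enorm_sub_setAverage_rpow_le hf hfLp hbdd hα hr hτ hτT M hMτ
  have hterm (m : ℕ) : ∫ s in timeInterval τ m, ‖f s - (1 / τ) • ∫ t in timeInterval τ m, f t‖ ^ r
      = (∫⁻ s in timeInterval τ m, ‖f s - ⨍ t in timeInterval τ m, f t‖ₑ ^ r).toReal := by
    rw [setAverage_eq, volume_real_timeInterval hτ.le, ← one_div,
      integral_eq_lintegral_of_nonneg_ae (ae_of_all _ fun _ => by positivity) (by fun_prop)]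
    simp_rw [ofReal_norm_rpow hr0]
  simp_rw [hterm]
  rw [← ENNReal.toReal_sum (ENNReal.sum_ne_top.1 (ne_top_of_le_ne_top ENNReal.ofReal_ne_top hsum))]
  exact ENNReal.toReal_le_of_le_ofReal (by positivity) hsum

end Averages

theorem integral_rpow_two_div_le {Ω : Type*} [MeasurableSpace Ω] {P : Measure Ω} {B K : Ω → ℝ}
    {A r : ℝ} (hr : 0 < r) (hA : 0 ≤ A) (hB : ∀ ω, 0 ≤ B ω) (hK : ∀ ω, 0 ≤ K ω)
    (hBK : ∀ᵐ ω ∂P, B ω ≤ A * K ω ^ r) (hK2 : Integrable (fun ω => K ω ^ 2) P) :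
    (∫ ω, B ω ^ (2 / r) ∂P) ^ ((1 : ℝ) / 2) ≤ A ^ (1 / r) * (∫ ω, K ω ^ 2 ∂P) ^ ((1 : ℝ) / 2) := by
  have hpt : ∀ᵐ ω ∂P, B ω ^ (2 / r) ≤ A ^ (2 / r) * K ω ^ 2 := by
    filter_upwards [hBK] with ω hω
    calc B ω ^ (2 / r) ≤ (A * K ω ^ r) ^ (2 / r) := Real.rpow_le_rpow (hB ω) hω (by positivity)
      _ = A ^ (2 / r) * K ω ^ 2 := by
        rw [Real.mul_rpow hA (Real.rpow_nonneg (hK ω) _), ← Real.rpow_mul (hK ω),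
          mul_div_cancel₀ _ hr.ne', Real.rpow_two]
  calc (∫ ω, B ω ^ (2 / r) ∂P) ^ ((1 : ℝ) / 2)
      ≤ (∫ ω, A ^ (2 / r) * K ω ^ 2 ∂P) ^ ((1 : ℝ) / 2) :=
        Real.rpow_le_rpow (integral_nonneg fun ω => Real.rpow_nonneg (hB ω) _)
          (integral_mono_of_nonneg (ae_of_all _ fun ω => Real.rpow_nonneg (hB ω) _)
            (hK2.const_mul _) hpt) (by norm_num)
    _ = A ^ (1 / r) * (∫ ω, K ω ^ 2 ∂P) ^ ((1 : ℝ) / 2) := by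
        rw [integral_const_mul,
          Real.mul_rpow (by positivity) (integral_nonneg fun ω => sq_nonneg _), ← Real.rpow_mul hA]
        congr 2
        ring

theorem nikolskii_average_approximation_general
    (α r : ℝ) (hα : α ∈ Set.Ioo (0 : ℝ) 1) (hr : 1 ≤ r)
    {X : Type*} [NormedAddCommGroup X] [NormedSpace ℝ X] [CompleteSpace X]
    {Ω : Type*} [MeasurableSpace Ω] (P : Measure Ω)
    (T : ℝ) (hT : 0 < T) (M : ℕ) (hM : 1 ≤ M) (τ : ℝ) (hτ : τ = T / M)
    (u : Ω → ℝ → X)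
    (hmeas : StronglyMeasurable (Function.uncurry u))
    (hint : ∀ᵐ ω ∂P, MemLp (u ω) (ENNReal.ofReal r) (volume.restrict (Set.Icc 0 T)))
    (hfin : ∀ᵐ ω ∂P, BddAbove {x : ℝ | ∃ h ∈ Set.Ioc (0 : ℝ) T,
      x = h ^ (-α) * (∫ s in Set.Icc (0 : ℝ) (T - h), ‖u ω (s + h) - u ω s‖ ^ r) ^ (1 / r)})
    (hL2 : Integrable (fun ω => (nikSeminorm X T α r (u ω)) ^ 2) P) :
    (∫ ω, (∑ m ∈ Finset.Icc 1 M,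
        ∫ s in Set.Icc (((m : ℝ) - 1) * τ) ((m : ℝ) * τ),
          ‖u ω s - (1 / τ) • ∫ t in Set.Icc (((m : ℝ) - 1) * τ) ((m : ℝ) * τ), u ω t‖ ^ r)
          ^ (2 / r) ∂P) ^ ((1 : ℝ) / 2)
      ≤ (2 ^ (α * r + 1) / (α * r + 1)) ^ (1 / r) * τ ^ α *
        (∫ ω, (nikSeminorm X T α r (u ω)) ^ 2 ∂P) ^ ((1 : ℝ) / 2) := by
  obtain ⟨hα0, -⟩ := hα
  have hr0 : 0 < r := by linarith
  have hM1 : (1 : ℝ) ≤ M := by exact_mod_cast hM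
  have hτ0 : 0 < τ := by rw [hτ]; positivity
  have hMτ : (M : ℝ) * τ = T := by rw [hτ]; field_simp
  have hτT : τ ≤ T := by nlinarith
  have hpath : ∀ᵐ ω ∂P, (∑ m ∈ Finset.Icc 1 M, ∫ s in timeInterval τ m,
      ‖u ω s - (1 / τ) • ∫ t in timeInterval τ m, u ω t‖ ^ r)
      ≤ 2 / (α * r + 1) * τ ^ (α * r) * nikSeminorm X T α r (u ω) ^ r := by
    filter_upwards [hint, hfin] with ω hLp hbdd
    exact sum_integral_norm_sub_average_rpow_le (hmeas.comp_measurable measurable_prodMk_left)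
      hLp hbdd hα0.le hr hτ0 hτT M hMτ.le
  refine (integral_rpow_two_div_le hr0 (by positivity)
    (fun ω => Finset.sum_nonneg fun m _ => integral_nonneg fun s => by positivity)
    (fun ω => nikSeminorm_nonneg) hpath hL2).trans ?_
  rw [Real.mul_rpow (by positivity) (by positivity), ← Real.rpow_mul hτ0.le,
    show α * r * (1 / r) = α by field_simp]
  gcongr
  exact Real.self_le_rpow_of_one_le one_le_two (by nlinarith)

/-- **Nikolskii approximation quality of time averages.** With `τ = T/M`, `t_m = mτ`,
`I_m = [t_{m-1}, t_m]` and `⟨u⟩_m = (1/τ)∫_{I_m} u`, if the paths of `u` are Bochner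
`r`-integrable with finite Nikolskii seminorm, square-integrable in `ω`, then
`(E[(Σ_m ∫_{I_m} ‖u(s) - ⟨u⟩_m‖^r ds)^(2/r)])^(1/2)
  ≤ (2^(αr+1)/(αr+1))^(1/r) τ^α (E[[u]²])^(1/2)`. -/
theorem nikolskii_average_approximation
    (α r : ℝ) (hα : α ∈ Set.Ioo (0 : ℝ) 1) (hr : 1 ≤ r)
    {X : Type*} [NormedAddCommGroup X] [NormedSpace ℝ X] [CompleteSpace X]
    {Ω : Type*} [MeasurableSpace Ω] (P : Measure Ω) [IsProbabilityMeasure P]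
    (T : ℝ) (hT : 0 < T) (M : ℕ) (hM : 1 ≤ M) (τ : ℝ) (hτ : τ = T / M)
    (u : Ω → ℝ → X)
    (hmeas : StronglyMeasurable (Function.uncurry u))
    (hint : ∀ᵐ ω ∂P, MemLp (u ω) (ENNReal.ofReal r) (volume.restrict (Set.Icc 0 T)))
    (hfin : ∀ᵐ ω ∂P, BddAbove {x : ℝ | ∃ h ∈ Set.Ioc (0 : ℝ) T,
      x = h ^ (-α) * (∫ s in Set.Icc (0 : ℝ) (T - h), ‖u ω (s + h) - u ω s‖ ^ r) ^ (1 / r)})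
    (hL2 : Integrable (fun ω => (nikSeminorm X T α r (u ω)) ^ 2) P) :
    (∫ ω, (∑ m ∈ Finset.Icc 1 M,
        ∫ s in Set.Icc (((m : ℝ) - 1) * τ) ((m : ℝ) * τ),
          ‖u ω s - (1 / τ) • ∫ t in Set.Icc (((m : ℝ) - 1) * τ) ((m : ℝ) * τ), u ω t‖ ^ r)
          ^ (2 / r) ∂P) ^ ((1 : ℝ) / 2)
      ≤ (2 ^ (α * r + 1) / (α * r + 1)) ^ (1 / r) * τ ^ α *
        (∫ ω, (nikSeminorm X T α r (u ω)) ^ 2 ∂P) ^ ((1 : ℝ) / 2) :=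
  nikolskii_average_approximation_general α r hα hr P T hT M hM τ hτ u hmeas hint hfin hL2
end

section
/- (Coarse reconstruction of averaged increments) Let E be a Banach space and W : [0,∞) → E be Bochner integrable on compact intervals. Let τ_f > 0, r ∈ ℕ with r ≥ 1, and τ_c := r τ_f. For a step size τ > 0 and m ≥ 1 define ⟨W⟩_m^τ := (1/τ)∫_{(m−1)τ}^{mτ} W(s) ds, ⟨W⟩_0^τ := 0, and Δ_m^τ 𝕎 := ⟨W⟩_m^τ − ⟨W⟩_{m−1}^τ. Then Δ_1^{τ_c} 𝕎 = Σ_{l=1}^{r} (1 − (l−1)/r) Δ_l^{τ_f} 𝕎, and for every j ≥ 2, Δ_j^{τ_c} 𝕎 = Σ_{l=0}^{r−1} ((l+1)/r) Δ_{rj−l}^{τ_f} 𝕎 + Σ_{l=0}^{r−2} (1 − (l+1)/r) Δ_{r(j−1)−l}^{τ_f} 𝕎. -/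
open MeasureTheory

/-- The mean value `⟨W⟩_m^τ = (1/τ)∫_{(m-1)τ}^{mτ} W(s) ds` for `m ≥ 1`, and `⟨W⟩_0^τ = 0`. -/
noncomputable def avgW (E : Type*) [NormedAddCommGroup E] [NormedSpace ℝ E]
    (W : ℝ → E) (τ : ℝ) (m : ℕ) : E :=
  if m = 0 then 0 else (1 / τ) • ∫ s in Set.Icc (((m : ℝ) - 1) * τ) ((m : ℝ) * τ), W s

/-- The averaged increment `Δ_m^τ 𝕎 = ⟨W⟩_m^τ - ⟨W⟩_{m-1}^τ`. -/
noncomputable def avgIncr (E : Type*) [NormedAddCommGroup E] [NormedSpace ℝ E]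
    (W : ℝ → E) (τ : ℝ) (m : ℕ) : E :=
  avgW E W τ m - avgW E W τ (m - 1)

/-! The mean over a coarse cell `[(j-1)τc, jτc]` is the average of the `r` fine means over the
fine cells it contains, because the integrals telescope. On the right-hand sides the fine
increments carry a rising ramp `(l+1)/r` over the fine cells of the `j`-th coarse cell and a
falling ramp over those of the preceding one; summation by parts turns the two ramps into the
averages of the fine means over these two coarse cells, whose difference is the coarse increment. -/

open Finset

section RampSums

variable {𝕜 E : Type*} [AddCommGroup E]

theorem sum_Icc_one_eq_sum_range_sub (f : ℕ → E) (n : ℕ) :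
    ∑ l ∈ Icc 1 n, f l = ∑ l ∈ range n, f (n - l) := by
  rw [← Ico_add_one_right_eq_Icc, sum_Ico_eq_sum_range, Nat.add_sub_cancel, ← sum_range_reflect]
  exact sum_congr rfl fun l hl => congrArg f (by have := mem_range.mp hl; omega)

theorem sum_range_cast_add_one_smul_sub_succ {R : Type*} [CommRing R] [Module R E]
    (b : ℕ → E) (n : ℕ) :
    ∑ l ∈ range n, ((l : R) + 1) • (b l - b (l + 1)) = ∑ l ∈ range n, b l - (n : R) • b n := by
  induction n with
  | zero => simp
  | succ n ih =>
    rw [sum_range_succ, ih, sum_range_succ]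
    push_cast
    module

variable [Field 𝕜] [CharZero 𝕜] [Module 𝕜 E]

theorem sum_range_rising_ramp_smul_sub_succ (b : ℕ → E) {r : ℕ} (hr : r ≠ 0) :
    ∑ l ∈ range r, (((l : 𝕜) + 1) / r) • (b l - b (l + 1))
      = (r : 𝕜)⁻¹ • ∑ l ∈ range r, b l - b r := by
  simp_rw [div_eq_inv_mul, mul_smul, ← smul_sum, sum_range_cast_add_one_smul_sub_succ,
    smul_sub, smul_smul, inv_mul_cancel₀ (Nat.cast_ne_zero (R := 𝕜).mpr hr), one_smul]

theorem sum_range_falling_ramp_smul_sub_succ (b : ℕ → E) {r : ℕ} (hr : r ≠ 0) :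
    ∑ l ∈ range (r - 1), (1 - ((l : 𝕜) + 1) / r) • (b l - b (l + 1))
      = b 0 - (r : 𝕜)⁻¹ • ∑ l ∈ range r, b l := by
  obtain ⟨n, rfl⟩ : ∃ n, r = n + 1 := ⟨r - 1, by omega⟩
  have hn : ((n : 𝕜) + 1) ≠ 0 := Nat.cast_add_one_ne_zero n
  simp_rw [Nat.add_sub_cancel, sub_smul, one_smul]
  rw [sum_sub_distrib, sum_range_sub']
  simp_rw [div_eq_inv_mul, mul_smul]
  rw [← smul_sum, sum_range_cast_add_one_smul_sub_succ, sum_range_succ _ n]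
  push_cast
  linear_combination (norm := module) (inv_mul_cancel₀ hn) • b n

end RampSums

section Averages

variable {E : Type*} [NormedAddCommGroup E] [NormedSpace ℝ E] {W : ℝ → E}

@[simp]
theorem avgW_zero (W : ℝ → E) (τ : ℝ) : avgW E W τ 0 = 0 := if_pos rfl

theorem avgIncr_sub (W : ℝ → E) (τ : ℝ) (M l : ℕ) :
    avgIncr E W τ (M - l) = avgW E W τ (M - l) - avgW E W τ (M - (l + 1)) := by
  rw [avgIncr, Nat.sub_sub]

theorem avgW_eq_smul_sub_integral (hW : ∀ a b : ℝ, IntervalIntegrable W volume a b)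
    {τ : ℝ} (hτ : 0 ≤ τ) {m : ℕ} (hm : m ≠ 0) :
    avgW E W τ m = τ⁻¹ • ((∫ s in 0..m * τ, W s) - ∫ s in 0..((m : ℝ) - 1) * τ, W s) := by
  rw [avgW, if_neg hm, one_div, intervalIntegral.integral_interval_sub_left (hW _ _) (hW _ _),
    intervalIntegral.integral_of_le (by nlinarith), integral_Icc_eq_integral_Ioc]

theorem avgW_natCast_mul_eq_smul_sum (hW : ∀ a b : ℝ, IntervalIntegrable W volume a b)
    {τ : ℝ} (hτ : 0 ≤ τ) (r j : ℕ) :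
    avgW E W (r * τ) j = (r : ℝ)⁻¹ • ∑ l ∈ range r, avgW E W τ (r * j - l) := by
  rcases Nat.eq_zero_or_pos j with rfl | hj
  · simp
  set F : ℕ → E := fun k => ∫ s in 0..(k : ℝ) * τ, W s
  have hfine : ∀ l ∈ range r,
      avgW E W τ (r * j - l) = τ⁻¹ • (F (r * j - l) - F (r * j - (l + 1))) := by
    intro l hl
    have hlt : l < r * j := (mem_range.mp hl).trans_le (Nat.le_mul_of_pos_right r hj)
    rw [avgW_eq_smul_sub_integral hW hτ (by omega)]
    simp only [F]
    push_cast [Nat.cast_sub hlt.le, Nat.cast_sub hlt]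
    ring_nf
  rw [sum_congr rfl hfine, ← smul_sum, sum_range_sub', smul_smul, ← mul_inv,
    avgW_eq_smul_sub_integral hW (by positivity) hj.ne']
  simp only [F, Nat.sub_zero, Nat.cast_sub (Nat.le_mul_of_pos_right r hj)]
  push_cast
  ring_nf

end Averages

theorem coarse_reconstruction_general
    {E : Type*} [NormedAddCommGroup E] [NormedSpace ℝ E]
    (W : ℝ → E) (hW : ∀ a b : ℝ, IntegrableOn W (Set.Icc a b))
    (τf : ℝ) (hτf : 0 < τf) (r : ℕ) (hr : 1 ≤ r) (τc : ℝ) (hτc : τc = (r : ℝ) * τf) :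
    (avgIncr E W τc 1
        = ∑ l ∈ Finset.Icc 1 r, (1 - ((l : ℝ) - 1) / r) • avgIncr E W τf l) ∧
    ∀ j : ℕ, 2 ≤ j →
      avgIncr E W τc j
        = (∑ l ∈ Finset.range r, (((l : ℝ) + 1) / r) • avgIncr E W τf (r * j - l))
          + ∑ l ∈ Finset.range (r - 1),
              (1 - ((l : ℝ) + 1) / r) • avgIncr E W τf (r * (j - 1) - l) := by
  have hr0 : r ≠ 0 := Nat.one_le_iff_ne_zero.mp hr
  have hcoarse (j : ℕ) : avgW E W τc j = (r : ℝ)⁻¹ • ∑ l ∈ range r, avgW E W τf (r * j - l) :=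
    hτc ▸ avgW_natCast_mul_eq_smul_sum (fun a b => (hW _ _).intervalIntegrable) hτf.le r j
  have hrising (M : ℕ) :=
    sum_range_rising_ramp_smul_sub_succ (𝕜 := ℝ) (fun l => avgW E W τf (M - l)) hr0
  refine ⟨?_, fun j hj => ?_⟩
  · calc avgIncr E W τc 1
        = ∑ l ∈ range r, (((l : ℝ) + 1) / r) • avgIncr E W τf (r * 1 - l) := by
          simp_rw [avgIncr_sub, hrising, avgIncr, hcoarse]
          simp
      _ = _ := by
          rw [sum_Icc_one_eq_sum_range_sub, mul_one]
          refine sum_congr rfl fun l hl => ?_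
          rw [Nat.cast_sub (mem_range.mp hl).le]
          congr 1
          field_simp
          ring
  · simp_rw [avgIncr_sub, hrising, sum_range_falling_ramp_smul_sub_succ (𝕜 := ℝ) _ hr0, avgIncr,
      hcoarse, Nat.sub_zero, ← Nat.mul_sub_one]
    abel

/-- **Coarse reconstruction of averaged increments.** For `τ_c = r τ_f`:
`Δ_1^{τ_c}𝕎 = Σ_{l=1}^r (1 - (l-1)/r) Δ_l^{τ_f}𝕎`, and for `j ≥ 2`,
`Δ_j^{τ_c}𝕎 = Σ_{l=0}^{r-1} ((l+1)/r) Δ_{rj-l}^{τ_f}𝕎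
  + Σ_{l=0}^{r-2} (1 - (l+1)/r) Δ_{r(j-1)-l}^{τ_f}𝕎`. -/
theorem coarse_reconstruction
    {E : Type*} [NormedAddCommGroup E] [NormedSpace ℝ E] [CompleteSpace E]
    (W : ℝ → E) (hW : ∀ a b : ℝ, IntegrableOn W (Set.Icc a b))
    (τf : ℝ) (hτf : 0 < τf) (r : ℕ) (hr : 1 ≤ r) (τc : ℝ) (hτc : τc = (r : ℝ) * τf) :
    (avgIncr E W τc 1
        = ∑ l ∈ Finset.Icc 1 r, (1 - ((l : ℝ) - 1) / r) • avgIncr E W τf l) ∧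
    ∀ j : ℕ, 2 ≤ j →
      avgIncr E W τc j
        = (∑ l ∈ Finset.range r, (((l : ℝ) + 1) / r) • avgIncr E W τf (r * j - l))
          + ∑ l ∈ Finset.range (r - 1),
              (1 - ((l : ℝ) + 1) / r) • avgIncr E W τf (r * (j - 1) - l) :=
  coarse_reconstruction_general W hW τf hτf r hr τc hτc
end
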